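/- arXiv:1201.0404 — 7 statements merged into one kernel-verified Lean document; each statement's English description precedes it below -/
import Mathlib

section
/- Let P be a polymatroid defined by submodular f, ρ ∈ P, and d ≥ 0. Then the set P_{ρ,d} = {x ≥ 0 : ρ + x ∈ P, x ≤ d} is a polymatroid defined by the submodular function f̂(S) = min over T ⊆ S of (f(T) − ρ(T) + d(S\T)). -/
/-!
Submodularity of `fhat`: pick minimizers `A ⊆ S` and `B ⊆ T`; then `A ∪ B ⊆ S ∪ T` and
`A ∩ B ⊆ S ∩ T` are admissible for `fhat (S ∪ T)` and `fhat (S ∩ T)`, `f` is submodular, `ρ` is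
modular, and since `d ≥ 0` the `d`-terms only lose by the exchange.

The description of `P_{ρ,d}`: for `T ⊆ S`, `x(S) = x(T) + x(S \ T) ≤ (f T - ρ(T)) + d(S \ T)`;
conversely `T = S` recovers `ρ + x ∈ P`, and `T = ∅` with `f ∅ = 0` recovers `x ≤ d`.
-/

/-- `fhat f ρ d S = min_{T ⊆ S} (f T − ρ(T) + d(S \ T))`. -/
noncomputable def fhat (n : ℕ) (f : Finset (Fin n) → ℝ) (ρ d : Fin n → ℝ)
    (S : Finset (Fin n)) : ℝ :=
  S.powerset.inf' ⟨∅, Finset.empty_mem_powerset S⟩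
    (fun T => f T - ∑ i ∈ T, ρ i + ∑ i ∈ S \ T, d i)

open Finset

theorem Finset.sum_union_sdiff_add_sum_inter_sdiff_le {α M : Type*} [DecidableEq α]
    [AddCommMonoid M] [PartialOrder M] [IsOrderedAddMonoid M] {d : α → M} (hd : ∀ i, 0 ≤ d i)
    (S T A B : Finset α) :
    ∑ i ∈ (S ∪ T) \ (A ∪ B), d i + ∑ i ∈ (S ∩ T) \ (A ∩ B), d i ≤
      ∑ i ∈ S \ A, d i + ∑ i ∈ T \ B, d i := by
  have hU : ∀ X ⊆ S ∪ T, ∑ i ∈ X, d i = ∑ i ∈ S ∪ T, if i ∈ X then d i else 0 := fun X hX => by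
    rw [sum_ite_mem, inter_eq_right.mpr hX]
  rw [hU _ sdiff_subset, hU _ (sdiff_subset.trans inter_subset_union),
    hU _ (sdiff_subset.trans subset_union_left), hU _ (sdiff_subset.trans subset_union_right),
    ← sum_add_distrib, ← sum_add_distrib]
  refine sum_le_sum fun i _ => ?_
  simp only [mem_sdiff, mem_union, mem_inter]
  split_ifs <;> simp_all

section fhat

variable {n : ℕ} {f : Finset (Fin n) → ℝ} {ρ d : Fin n → ℝ} {S T : Finset (Fin n)}

theorem fhat_le (hT : T ⊆ S) : fhat n f ρ d S ≤ f T - ∑ i ∈ T, ρ i + ∑ i ∈ S \ T, d i :=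
  inf'_le _ (mem_powerset.mpr hT)

theorem le_fhat_iff {c : ℝ} :
    c ≤ fhat n f ρ d S ↔ ∀ T ⊆ S, c ≤ f T - ∑ i ∈ T, ρ i + ∑ i ∈ S \ T, d i := by
  exact (Finset.le_inf'_iff _ _).trans (by simp only [mem_powerset])

theorem exists_subset_fhat_eq (f : Finset (Fin n) → ℝ) (ρ d : Fin n → ℝ) (S : Finset (Fin n)) :
    ∃ T ⊆ S, fhat n f ρ d S = f T - ∑ i ∈ T, ρ i + ∑ i ∈ S \ T, d i := by
  obtain ⟨T, hT, hT_eq⟩ := exists_mem_eq_inf' ⟨∅, empty_mem_powerset S⟩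
    (fun T => f T - ∑ i ∈ T, ρ i + ∑ i ∈ S \ T, d i)
  exact ⟨T, mem_powerset.mp hT, hT_eq⟩

theorem fhat_le_sub_sum (f : Finset (Fin n) → ℝ) (ρ d : Fin n → ℝ) (S : Finset (Fin n)) :
    fhat n f ρ d S ≤ f S - ∑ i ∈ S, ρ i := by
  simpa using fhat_le (f := f) (ρ := ρ) (d := d) (subset_refl S)

theorem fhat_le_sum (hf0 : f ∅ = 0) (ρ d : Fin n → ℝ) (S : Finset (Fin n)) :
    fhat n f ρ d S ≤ ∑ i ∈ S, d i := by
  simpa [hf0] using fhat_le (f := f) (ρ := ρ) (d := d) (empty_subset S)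

theorem fhat_submodular (hsub : ∀ S T : Finset (Fin n), f (S ∪ T) + f (S ∩ T) ≤ f S + f T)
    (hd : ∀ i, 0 ≤ d i) (S T : Finset (Fin n)) :
    fhat n f ρ d (S ∪ T) + fhat n f ρ d (S ∩ T) ≤ fhat n f ρ d S + fhat n f ρ d T := by
  obtain ⟨A, hA, hA_eq⟩ := exists_subset_fhat_eq f ρ d S
  obtain ⟨B, hB, hB_eq⟩ := exists_subset_fhat_eq f ρ d T
  have h_union := fhat_le (f := f) (ρ := ρ) (d := d) (union_subset_union hA hB)
  have h_inter := fhat_le (f := f) (ρ := ρ) (d := d) (inter_subset_inter hA hB)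
  have hρ : ∑ i ∈ A ∪ B, ρ i + ∑ i ∈ A ∩ B, ρ i = ∑ i ∈ A, ρ i + ∑ i ∈ B, ρ i :=
    sum_union_inter
  have hd_exch := sum_union_sdiff_add_sum_inter_sdiff_le hd S T A B
  linarith [hsub A B]

theorem sum_le_fhat_iff (hf0 : f ∅ = 0) {x : Fin n → ℝ} :
    (∀ S, ∑ i ∈ S, x i ≤ fhat n f ρ d S) ↔
      (∀ i, x i ≤ d i) ∧ ∀ S, ∑ i ∈ S, (ρ i + x i) ≤ f S := by
  constructor
  · intro hx
    refine ⟨fun i => ?_, fun S => ?_⟩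
    · simpa using (hx {i}).trans (fhat_le_sum hf0 ρ d {i})
    · rw [sum_add_distrib]
      linarith [hx S, fhat_le_sub_sum f ρ d S]
  · rintro ⟨hxd, hxP⟩ S
    refine le_fhat_iff.mpr fun T hT => ?_
    have h_split : ∑ i ∈ S \ T, x i + ∑ i ∈ T, x i = ∑ i ∈ S, x i := sum_sdiff hT
    have h_rest : ∑ i ∈ S \ T, x i ≤ ∑ i ∈ S \ T, d i := sum_le_sum fun i _ => hxd i
    have hT_P : ∑ i ∈ T, ρ i + ∑ i ∈ T, x i ≤ f T := sum_add_distrib.symm.trans_le (hxP T)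
    linarith

end fhat

theorem remnant_supply_polymatroid_general (n : ℕ) (f : Finset (Fin n) → ℝ)
    (hsub : ∀ S T : Finset (Fin n), f (S ∪ T) + f (S ∩ T) ≤ f S + f T)
    (hf0 : f ∅ = 0)
    (ρ : Fin n → ℝ)
    (d : Fin n → ℝ) (hd : ∀ i, 0 ≤ d i) :
    (∀ S T : Finset (Fin n),
        fhat n f ρ d (S ∪ T) + fhat n f ρ d (S ∩ T) ≤ fhat n f ρ d S + fhat n f ρ d T) ∧
    {x : Fin n → ℝ | (∀ i, 0 ≤ x i) ∧ (∀ i, x i ≤ d i) ∧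
        ∀ S : Finset (Fin n), ∑ i ∈ S, (ρ i + x i) ≤ f S}
      = {x : Fin n → ℝ | (∀ i, 0 ≤ x i) ∧
        ∀ S : Finset (Fin n), ∑ i ∈ S, x i ≤ fhat n f ρ d S} := by
  refine ⟨fhat_submodular hsub hd, Set.ext fun x => ?_⟩
  simp only [Set.mem_ofPred_eq, sum_le_fhat_iff hf0]

theorem remnant_supply_polymatroid (n : ℕ) (f : Finset (Fin n) → ℝ)
    (hmono : ∀ S T : Finset (Fin n), S ⊆ T → f S ≤ f T)
    (hsub : ∀ S T : Finset (Fin n), f (S ∪ T) + f (S ∩ T) ≤ f S + f T)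
    (hf0 : f ∅ = 0)
    (ρ : Fin n → ℝ) (hρ0 : ∀ i, 0 ≤ ρ i)
    (hρP : ∀ S : Finset (Fin n), ∑ i ∈ S, ρ i ≤ f S)
    (d : Fin n → ℝ) (hd : ∀ i, 0 ≤ d i) :
    (∀ S T : Finset (Fin n),
        fhat n f ρ d (S ∪ T) + fhat n f ρ d (S ∩ T) ≤ fhat n f ρ d S + fhat n f ρ d T) ∧
    {x : Fin n → ℝ | (∀ i, 0 ≤ x i) ∧ (∀ i, x i ≤ d i) ∧
        ∀ S : Finset (Fin n), ∑ i ∈ S, (ρ i + x i) ≤ f S}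
      = {x : Fin n → ℝ | (∀ i, 0 ≤ x i) ∧
        ∀ S : Finset (Fin n), ∑ i ∈ S, x i ≤ fhat n f ρ d S} :=
  remnant_supply_polymatroid_general n f hsub hf0 ρ d hd
end

section
/- If f is submodular and ĝ(S) = min_{T ⊇ S} f(T), then ĝ is monotone and submodular, and defines the same polymatroid as f (i.e. {x ≥ 0 : x(S) ≤ f(S) ∀S} = {x ≥ 0 : x(S) ≤ ĝ(S) ∀S}). -/
/-!
Every value of `ĝ` is attained: `ĝ S = f T` for some `T ⊇ S`. Monotonicity is then immediate,
and for submodularity one takes such minimizers `A ⊇ S`, `B ⊇ T`; since `A ∪ B ⊇ S ∪ T` and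
`A ∩ B ⊇ S ∩ T`, submodularity of `f` at `A, B` bounds `ĝ (S ∪ T) + ĝ (S ∩ T)` by
`f A + f B = ĝ S + ĝ T`. For nonnegative `x`, the sum `x(S)` is monotone in `S`, so `x(S) ≤ x(T) ≤ f T`
gives `x(S) ≤ ĝ S`; the converse uses `ĝ ≤ f`.
-/

/-- `monotonization f S = min_{T ⊇ S} f T`. -/
noncomputable def monotonization (n : ℕ) (f : Finset (Fin n) → ℝ)
    (S : Finset (Fin n)) : ℝ :=
  ((Finset.univ : Finset (Finset (Fin n))).filter (fun T => S ⊆ T)).inf'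
    ⟨S, by simp⟩ f

namespace Monotonization

variable {n : ℕ} (f : Finset (Fin n) → ℝ)

lemma le_apply_of_subset {S T : Finset (Fin n)} (h : S ⊆ T) : monotonization n f S ≤ f T :=
  Finset.inf'_le _ (by simp [h])

lemma le_apply (S : Finset (Fin n)) : monotonization n f S ≤ f S :=
  le_apply_of_subset f subset_rfl

lemma exists_superset_eq (S : Finset (Fin n)) :
    ∃ T, S ⊆ T ∧ monotonization n f S = f T := by
  obtain ⟨T, hT, hEq⟩ := Finset.exists_mem_eq_inf' (s := {T | S ⊆ T}) ⟨S, by simp⟩ f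
  exact ⟨T, by simpa using hT, hEq⟩

lemma mono : Monotone (monotonization n f) := by
  intro S T hST
  obtain ⟨U, hTU, hU⟩ := exists_superset_eq f T
  exact hU ▸ le_apply_of_subset f (hST.trans hTU)

lemma submodular (hsub : ∀ S T : Finset (Fin n), f (S ∪ T) + f (S ∩ T) ≤ f S + f T)
    (S T : Finset (Fin n)) :
    monotonization n f (S ∪ T) + monotonization n f (S ∩ T)
      ≤ monotonization n f S + monotonization n f T := by
  obtain ⟨A, hSA, hA⟩ := exists_superset_eq f S
  obtain ⟨B, hTB, hB⟩ := exists_superset_eq f T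
  calc monotonization n f (S ∪ T) + monotonization n f (S ∩ T)
      ≤ f (A ∪ B) + f (A ∩ B) :=
        add_le_add (le_apply_of_subset f (Finset.union_subset_union hSA hTB))
          (le_apply_of_subset f (Finset.inter_subset_inter hSA hTB))
    _ ≤ f A + f B := hsub A B
    _ = monotonization n f S + monotonization n f T := by rw [hA, hB]

lemma forall_sum_le_iff {x : Fin n → ℝ} (hx : ∀ i, 0 ≤ x i) :
    (∀ S, ∑ i ∈ S, x i ≤ monotonization n f S) ↔ ∀ S, ∑ i ∈ S, x i ≤ f S := by
  refine ⟨fun h S => (h S).trans (le_apply f S), fun h S => ?_⟩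
  obtain ⟨T, hST, hT⟩ := exists_superset_eq f S
  calc ∑ i ∈ S, x i ≤ ∑ i ∈ T, x i := Finset.sum_le_sum_of_subset_of_nonneg hST fun i _ _ => hx i
    _ ≤ f T := h T
    _ = monotonization n f S := hT.symm

end Monotonization

theorem monotonization_spec (n : ℕ) (f : Finset (Fin n) → ℝ)
    (hsub : ∀ S T : Finset (Fin n), f (S ∪ T) + f (S ∩ T) ≤ f S + f T) :
    (∀ S T : Finset (Fin n), S ⊆ T → monotonization n f S ≤ monotonization n f T) ∧
    (∀ S T : Finset (Fin n),
        monotonization n f (S ∪ T) + monotonization n f (S ∩ T)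
          ≤ monotonization n f S + monotonization n f T) ∧
    {x : Fin n → ℝ | (∀ i, 0 ≤ x i) ∧ ∀ S : Finset (Fin n), ∑ i ∈ S, x i ≤ f S}
      = {x : Fin n → ℝ | (∀ i, 0 ≤ x i) ∧
          ∀ S : Finset (Fin n), ∑ i ∈ S, x i ≤ monotonization n f S} := by
  refine ⟨fun S T => (Monotonization.mono f ·), Monotonization.submodular f hsub, ?_⟩
  ext x
  exact and_congr_right fun hx => (Monotonization.forall_sum_le_iff f hx).symm
end

section
/- In a polymatroid P_{ρ,d} defined by submodular f̂, the amount δ_i = sup{x_i ≥ 0 : P^i_{ρ,d}(x_i) = P^i_{ρ,d}(0)} equals (max_{x ∈ P_{ρ,d}} 𝟙ᵗx) − (max_{x ∈ P_{ρ,d}} 𝟙_{−i}ᵗ x_{−i}), i.e. the difference between the maximum total allocation and the maximum total allocation to players other than i. -/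
/-!
Write `g S = f S - ρ(S)`, so that `P_{ρ,d}` is the set `cappedPolymatroid g d` of `0 ≤ x ≤ d`
with `x(S) ≤ g S`, and `δ_i = sSup (clinchAmounts P_{ρ,d} i)`.

By submodularity the sets tight at a point `x` are closed under union, so there is a largest one,
`U`; a maximiser of `𝟙ᵗx` over the compact polytope has `x_j = d_j` off `U`, since otherwise it
could be raised at `j`. Hence the maximum `M` equals `g U + d(Uᶜ)` (Edmonds' max–min formula).
Maximising `𝟙_{−i}ᵗx_{−i}` is the same problem for the cap `d'` with `d'_i = 0`, with value
`N = g T + d'(Tᶜ)`. Raising `x_i` from `0` to `a` keeps `x` feasible iff `a ≤ d_i` and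
`a ≤ g S - x(S)` for all `S ∋ i`; uncrossing `S` with `T` gives `M + x(S) ≤ g S + N`, so `a = M - N`
is admissible, while raising a maximiser of the restricted problem by an admissible `a` gives a
feasible point of total `N + a ≤ M`.
-/

open Finset

variable {ι : Type*}

def cappedPolymatroid (g : Finset ι → ℝ) (d : ι → ℝ) : Set (ι → ℝ) :=
  {x | (∀ j, 0 ≤ x j) ∧ (∀ j, x j ≤ d j) ∧ ∀ S, ∑ j ∈ S, x j ≤ g S}

def IsSubmodular [DecidableEq ι] (g : Finset ι → ℝ) : Prop :=
  ∀ S T, g (S ∪ T) + g (S ∩ T) ≤ g S + g T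

def clinchAmounts [DecidableEq ι] (P : Set (ι → ℝ)) (i : ι) : Set ℝ :=
  {a | 0 ≤ a ∧ {y | Function.update y i a ∈ P} = {y | Function.update y i 0 ∈ P}}

section cappedPolymatroid

variable {g : Finset ι → ℝ} {d e x y : ι → ℝ}

theorem setOf_add_sum_le_eq_cappedPolymatroid (f : Finset ι → ℝ) (ρ d : ι → ℝ) :
    {x : ι → ℝ | (∀ j, 0 ≤ x j) ∧ (∀ j, x j ≤ d j) ∧ ∀ S, ∑ j ∈ S, (ρ j + x j) ≤ f S} =
      cappedPolymatroid (fun S => f S - ∑ j ∈ S, ρ j) d := by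
  ext x
  simp only [cappedPolymatroid, Set.mem_ofPred_eq, sum_add_distrib, le_sub_iff_add_le']

theorem isCompact_cappedPolymatroid (g : Finset ι → ℝ) (d : ι → ℝ) :
    IsCompact (cappedPolymatroid g d) := by
  have : cappedPolymatroid g d = Set.Icc 0 d ∩ ⋂ S, {x | ∑ j ∈ S, x j ≤ g S} := by
    ext x
    simp only [cappedPolymatroid, Set.mem_ofPred_eq, Set.mem_inter_iff, Set.mem_Icc,
      Set.mem_iInter, Pi.le_def, Pi.zero_apply, and_assoc]
  rw [this]
  exact isCompact_Icc.inter_right <| isClosed_iInter fun S =>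
    isClosed_le (continuous_finsetSum S fun j _ => continuous_apply j) continuous_const

theorem zero_mem_cappedPolymatroid (hg : ∀ S, 0 ≤ g S) (hd : ∀ j, 0 ≤ d j) :
    0 ∈ cappedPolymatroid g d :=
  ⟨fun _ => le_rfl, hd, fun S => by simpa using hg S⟩

theorem cappedPolymatroid_mono (hde : ∀ j, d j ≤ e j) :
    cappedPolymatroid g d ⊆ cappedPolymatroid g e :=
  fun _ ⟨hx0, hxd, hxg⟩ => ⟨hx0, fun j => (hxd j).trans (hde j), hxg⟩

theorem mem_cappedPolymatroid_of_le (hx : x ∈ cappedPolymatroid g d) (hy0 : ∀ j, 0 ≤ y j)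
    (hyx : ∀ j, y j ≤ x j) : y ∈ cappedPolymatroid g d :=
  ⟨hy0, fun j => (hyx j).trans (hx.2.1 j),
    fun S => (sum_le_sum fun j _ => hyx j).trans (hx.2.2 S)⟩

variable [DecidableEq ι]

theorem sum_add_pi_single (S : Finset ι) (x : ι → ℝ) (i : ι) (a : ℝ) :
    ∑ j ∈ S, (x + Pi.single i a : ι → ℝ) j = ∑ j ∈ S, x j + if i ∈ S then a else 0 := by
  simp only [Pi.add_apply, sum_add_distrib, sum_pi_single']

theorem update_eq_update_zero_add_pi_single (x : ι → ℝ) (i : ι) (a : ℝ) :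
    Function.update x i a = Function.update x i 0 + Pi.single i a := by
  ext j
  rcases eq_or_ne j i with rfl | hji
  · simp
  · simp [hji]

theorem add_pi_single_mem_cappedPolymatroid (hx : x ∈ cappedPolymatroid g d) {i : ι} {a : ℝ}
    (ha : 0 ≤ a) (had : x i + a ≤ d i) (hS : ∀ S, i ∈ S → ∑ j ∈ S, x j + a ≤ g S) :
    x + Pi.single i a ∈ cappedPolymatroid g d := by
  obtain ⟨hx0, hxd, hxg⟩ := hx
  refine ⟨fun j => ?_, fun j => ?_, fun S => ?_⟩
  · rcases eq_or_ne j i with rfl | hji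
    · simpa using add_nonneg (hx0 j) ha
    · simpa [hji] using hx0 j
  · rcases eq_or_ne j i with rfl | hji
    · simpa using had
    · simpa [hji] using hxd j
  · rw [sum_add_pi_single]
    split_ifs with hiS
    · exact hS S hiS
    · simpa using hxg S

theorem update_zero_mem_cappedPolymatroid (hx : x ∈ cappedPolymatroid g d) (i : ι) :
    Function.update x i 0 ∈ cappedPolymatroid g (Function.update d i 0) := by
  obtain ⟨hx0, hxd, hxg⟩ := hx
  have hle : ∀ j, Function.update x i 0 j ≤ x j := fun j => by
    rcases eq_or_ne j i with rfl | hji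
    · simpa using hx0 j
    · simp [hji]
  refine ⟨fun j => ?_, fun j => ?_, fun S => (sum_le_sum fun j _ => hle j).trans (hxg S)⟩
  · rcases eq_or_ne j i with rfl | hji
    · simp
    · simpa [hji] using hx0 j
  · rcases eq_or_ne j i with rfl | hji
    · simp
    · simpa [hji] using hxd j

theorem mem_cappedPolymatroid_update_zero_iff (hdi : 0 ≤ d i) :
    x ∈ cappedPolymatroid g (Function.update d i 0) ↔ x ∈ cappedPolymatroid g d ∧ x i = 0 := by
  constructor
  · intro hx
    refine ⟨cappedPolymatroid_mono (fun j => ?_) hx,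
      le_antisymm (by simpa using hx.2.1 i) (hx.1 i)⟩
    rcases eq_or_ne j i with rfl | hji
    · simpa using hdi
    · simp [hji]
  · rintro ⟨hx, hxi⟩
    refine ⟨hx.1, fun j => ?_, hx.2.2⟩
    rcases eq_or_ne j i with rfl | hji
    · simp [hxi]
    · simpa [hji] using hx.2.1 j

variable [Fintype ι]

theorem sum_le_add_sum_compl (hx : x ∈ cappedPolymatroid g d) (T : Finset ι) :
    ∑ j, x j ≤ g T + ∑ j ∈ Tᶜ, d j := by
  rw [← sum_add_sum_compl T x]
  exact add_le_add (hx.2.2 T) (sum_le_sum fun j _ => hx.2.1 j)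

end cappedPolymatroid

namespace IsSubmodular

variable [DecidableEq ι] {g : Finset ι → ℝ} {d e x z : ι → ℝ}

theorem sub_sum (hg : IsSubmodular g) (ρ : ι → ℝ) :
    IsSubmodular fun S => g S - ∑ j ∈ S, ρ j := by
  intro S T
  have := sum_union_inter (s₁ := S) (s₂ := T) (f := ρ)
  linarith [hg S T]

theorem sum_union_eq (hg : IsSubmodular g) (hx : ∀ S, ∑ j ∈ S, x j ≤ g S) {S T : Finset ι}
    (hS : ∑ j ∈ S, x j = g S) (hT : ∑ j ∈ T, x j = g T) : ∑ j ∈ S ∪ T, x j = g (S ∪ T) := by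
  have := sum_union_inter (s₁ := S) (s₂ := T) (f := x)
  linarith [hg S T, hx (S ∪ T), hx (S ∩ T)]

theorem exists_tight_superset [Fintype ι] (hg : IsSubmodular g) (hg0 : g ∅ = 0)
    (hx : ∀ S, ∑ j ∈ S, x j ≤ g S) :
    ∃ U, ∑ j ∈ U, x j = g U ∧ ∀ S, ∑ j ∈ S, x j = g S → S ⊆ U := by
  classical
  refine ⟨(univ.filter fun S => ∑ j ∈ S, x j = g S).sup id, ?_, fun S hS => ?_⟩
  · exact sup_induction (p := fun U => ∑ j ∈ U, x j = g U) (by simp [hg0])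
      (fun S hS T hT => hg.sum_union_eq hx hS hT) fun S hS => (mem_filter.1 hS).2
  · exact le_sup (f := id) (mem_filter.2 ⟨mem_univ S, hS⟩)

variable [Fintype ι]

theorem sum_add_sum_le (hg : IsSubmodular g) (hz : z ∈ cappedPolymatroid g d)
    (hx : x ∈ cappedPolymatroid g e) {S : Finset ι} (hde : ∀ j ∉ S, d j ≤ e j) (T : Finset ι) :
    ∑ j, z j + ∑ j ∈ S, x j ≤ g S + (g T + ∑ j ∈ Tᶜ, e j) := by
  have hz' : ∑ j, z j ≤ g (S ∪ T) + ∑ j ∈ (S ∪ T)ᶜ, e j :=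
    (sum_le_add_sum_compl hz _).trans <| add_le_add le_rfl (sum_le_sum fun j hj =>
      hde j fun hjS => mem_compl.1 hj (mem_union_left T hjS))
  have hx' : ∑ j ∈ S, x j ≤ g (S ∩ T) + ∑ j ∈ S \ T, e j := by
    rw [← sum_inter_add_sum_sdiff S T x]
    exact add_le_add (hx.2.2 _) (sum_le_sum fun j _ => hx.2.1 j)
  have hsplit : ∑ j ∈ Tᶜ, e j = ∑ j ∈ S \ T, e j + ∑ j ∈ (S ∪ T)ᶜ, e j := by
    rw [← sum_inter_add_sum_sdiff Tᶜ S e]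
    congr 2 <;> ext j <;> simp [and_comm]
  linarith [hg S T]

end IsSubmodular

section MaxMin

open Filter Topology

variable [DecidableEq ι] [Fintype ι] {g : Finset ι → ℝ} {d x : ι → ℝ}

theorem eq_of_isMaxOn_sum (hx : x ∈ cappedPolymatroid g d)
    (hmax : IsMaxOn (fun y => ∑ j, y j) (cappedPolymatroid g d) x) {i : ι}
    (hi : ∀ S, i ∈ S → ∑ j ∈ S, x j < g S) : x i = d i := by
  by_contra hne
  have hroom : ∀ᶠ a in 𝓝 (0 : ℝ), a ≤ d i - x i ∧ ∀ S, i ∈ S → a ≤ g S - ∑ j ∈ S, x j :=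
    (eventually_le_nhds (sub_pos.2 ((hx.2.1 i).lt_of_ne hne))).and <| eventually_all.2 fun S => by
      by_cases hiS : i ∈ S
      · exact (eventually_le_nhds (sub_pos.2 (hi S hiS))).mono fun a ha _ => ha
      · exact Eventually.of_forall fun a h => absurd h hiS
  obtain ⟨a, ⟨had, haS⟩, ha⟩ := ((hroom.filter_mono (nhdsWithin_le_nhds (s := Set.Ioi 0))).and
    self_mem_nhdsWithin).exists
  have hbig := hmax <| add_pi_single_mem_cappedPolymatroid hx (le_of_lt ha) (by linarith)
    fun S hS => by linarith [haS S hS]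
  simp only [Set.mem_ofPred_eq, sum_add_pi_single, if_pos (mem_univ i)] at hbig
  linarith [show (0 : ℝ) < a from ha]

theorem IsSubmodular.exists_isGreatest_sum (hg : IsSubmodular g) (hg0 : g ∅ = 0)
    (hgnn : ∀ S, 0 ≤ g S) (hd : ∀ j, 0 ≤ d j) :
    ∃ T, IsGreatest {s | ∃ x ∈ cappedPolymatroid g d, s = ∑ j, x j} (g T + ∑ j ∈ Tᶜ, d j) := by
  obtain ⟨x, hx, hmax⟩ := (isCompact_cappedPolymatroid g d).exists_isMaxOn
    ⟨0, zero_mem_cappedPolymatroid hgnn hd⟩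
    (continuous_finsetSum _ fun j _ => continuous_apply j).continuousOn
  obtain ⟨U, hU, hUmax⟩ := hg.exists_tight_superset hg0 hx.2.2
  have hsat : ∀ j ∈ Uᶜ, x j = d j := fun j hj => eq_of_isMaxOn_sum hx hmax fun S hjS =>
    (hx.2.2 S).lt_of_ne fun hS => mem_compl.1 hj (hUmax S hS hjS)
  refine ⟨U, ⟨x, hx, ?_⟩, ?_⟩
  · rw [← sum_add_sum_compl U x, hU, sum_congr rfl hsat]
  · rintro s ⟨y, hy, rfl⟩
    exact sum_le_add_sum_compl hy U

end MaxMin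

section Clinch

variable [DecidableEq ι] [Fintype ι] {g : Finset ι → ℝ} {d x : ι → ℝ} {i : ι}

theorem le_sub_of_mem_clinchAmounts {P : Set (ι → ℝ)} {a M : ℝ}
    (hM : M ∈ upperBounds {s | ∃ x ∈ P, s = ∑ j, x j}) (hx : x ∈ P) (hxi : x i = 0)
    (ha : a ∈ clinchAmounts P i) : a ≤ M - ∑ j, x j := by
  have hx0 : Function.update x i 0 = x := by rw [← hxi, Function.update_eq_self]
  have hxa : Function.update x i a ∈ P := by
    have : x ∈ {y | Function.update y i 0 ∈ P} := by simpa [hx0] using hx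
    rwa [← ha.2] at this
  have := hM ⟨_, hxa, rfl⟩
  rw [update_eq_update_zero_add_pi_single, hx0, sum_add_pi_single, if_pos (mem_univ i)] at this
  linarith

theorem setOf_sum_erase_eq (hdi : 0 ≤ d i) :
    {s | ∃ x ∈ cappedPolymatroid g d, s = ∑ j ∈ univ.erase i, x j} =
      {s | ∃ x ∈ cappedPolymatroid g (Function.update d i 0), s = ∑ j, x j} := by
  ext s
  constructor
  · rintro ⟨x, hx, rfl⟩
    refine ⟨_, update_zero_mem_cappedPolymatroid hx i, ?_⟩
    rw [sum_update_of_mem (mem_univ i), sdiff_singleton_eq_erase, zero_add]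
  · rintro ⟨x, hx, rfl⟩
    obtain ⟨hx, hxi⟩ := (mem_cappedPolymatroid_update_zero_iff hdi).1 hx
    exact ⟨x, hx, (sum_erase _ hxi).symm⟩

theorem IsSubmodular.sub_mem_clinchAmounts (hg : IsSubmodular g) (hdi : 0 ≤ d i) {M : ℝ}
    {T : Finset ι} (hM : IsGreatest {s | ∃ x ∈ cappedPolymatroid g d, s = ∑ j, x j} M)
    (hN : IsGreatest {s | ∃ x ∈ cappedPolymatroid g (Function.update d i 0), s = ∑ j, x j}
      (g T + ∑ j ∈ Tᶜ, Function.update d i 0 j)) :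
    M - (g T + ∑ j ∈ Tᶜ, Function.update d i 0 j) ∈ clinchAmounts (cappedPolymatroid g d) i := by
  set N := g T + ∑ j ∈ Tᶜ, Function.update d i 0 j
  obtain ⟨z, hz, rfl⟩ := hM.1
  have hNM : N ≤ ∑ j, z j := by
    obtain ⟨x, hx, hxN⟩ := hN.1
    exact hxN ▸ hM.2 ⟨x, ((mem_cappedPolymatroid_update_zero_iff hdi).1 hx).1, rfl⟩
  have hMN : ∑ j, z j ≤ N + d i := by
    have := hN.2 ⟨_, update_zero_mem_cappedPolymatroid hz i, rfl⟩
    rw [← Function.update_eq_self i z, update_eq_update_zero_add_pi_single, sum_add_pi_single,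
      if_pos (mem_univ i)]
    linarith [hz.2.1 i]
  refine ⟨sub_nonneg.2 hNM, Set.ext fun y => ⟨fun hy => ?_, fun hy => ?_⟩⟩
  · refine mem_cappedPolymatroid_of_le hy (fun j => ?_) (fun j => ?_) <;>
      rcases eq_or_ne j i with rfl | hji
    · simp
    · simpa [hji] using hy.1 j
    · simpa using sub_nonneg.2 hNM
    · simp [hji]
  · rw [Set.mem_ofPred_eq, update_eq_update_zero_add_pi_single]
    refine add_pi_single_mem_cappedPolymatroid hy (sub_nonneg.2 hNM) (by simp; linarith)
      fun S hiS => ?_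
    have := hg.sum_add_sum_le hz (by simpa using update_zero_mem_cappedPolymatroid hy i)
      (S := S) (fun j hj => (Function.update_of_ne (ne_of_mem_of_not_mem hiS hj).symm _ _).ge) T
    linarith

theorem IsSubmodular.sSup_clinchAmounts_eq (hg : IsSubmodular g) (hg0 : g ∅ = 0)
    (hgnn : ∀ S, 0 ≤ g S) (hd : ∀ j, 0 ≤ d j) (i : ι) :
    sSup (clinchAmounts (cappedPolymatroid g d) i) =
      sSup {s | ∃ x ∈ cappedPolymatroid g d, s = ∑ j, x j} -
        sSup {s | ∃ x ∈ cappedPolymatroid g d, s = ∑ j ∈ univ.erase i, x j} := by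
  have hd' : ∀ j, 0 ≤ Function.update d i 0 j := fun j => by
    rcases eq_or_ne j i with rfl | hji
    · simp
    · simpa [hji] using hd j
  obtain ⟨_, hM⟩ := hg.exists_isGreatest_sum hg0 hgnn hd
  obtain ⟨T, hN⟩ := hg.exists_isGreatest_sum hg0 hgnn hd'
  obtain ⟨x, hx, hxN⟩ := hN.1
  obtain ⟨hx, hxi⟩ := (mem_cappedPolymatroid_update_zero_iff (hd i)).1 hx
  rw [setOf_sum_erase_eq (hd i), hM.csSup_eq, hN.csSup_eq]
  refine IsGreatest.csSup_eq ⟨hg.sub_mem_clinchAmounts (hd i) hM hN, fun a ha => ?_⟩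
  rw [hxN]
  exact le_sub_of_mem_clinchAmounts hM.2 hx hxi ha

end Clinch

theorem clinch_amount_formula_general (n : ℕ) (f : Finset (Fin n) → ℝ)
    (hsub : ∀ S T : Finset (Fin n), f (S ∪ T) + f (S ∩ T) ≤ f S + f T)
    (hf0 : f ∅ = 0)
    (ρ : Fin n → ℝ)
    (hρP : ∀ S : Finset (Fin n), ∑ i ∈ S, ρ i ≤ f S)
    (d : Fin n → ℝ) (hd : ∀ i, 0 ≤ d i)
    (i : Fin n)
    (Prd : Set (Fin n → ℝ))
    (hPrd : Prd = {x | (∀ j, 0 ≤ x j) ∧ (∀ j, x j ≤ d j) ∧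
        ∀ S : Finset (Fin n), ∑ j ∈ S, (ρ j + x j) ≤ f S}) :
    sSup {a : ℝ | 0 ≤ a ∧
        {y : Fin n → ℝ | Function.update y i a ∈ Prd}
          = {y : Fin n → ℝ | Function.update y i 0 ∈ Prd}}
      = sSup {s : ℝ | ∃ x ∈ Prd, s = ∑ j, x j}
        - sSup {s : ℝ | ∃ x ∈ Prd, s = ∑ j ∈ Finset.univ.erase i, x j} := by
  rw [hPrd, setOf_add_sum_le_eq_cappedPolymatroid]
  exact IsSubmodular.sSup_clinchAmounts_eq (IsSubmodular.sub_sum hsub ρ) (by simp [hf0])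
    (fun S => sub_nonneg.2 (hρP S)) hd i

theorem clinch_amount_formula (n : ℕ) (f : Finset (Fin n) → ℝ)
    (hmono : ∀ S T : Finset (Fin n), S ⊆ T → f S ≤ f T)
    (hsub : ∀ S T : Finset (Fin n), f (S ∪ T) + f (S ∩ T) ≤ f S + f T)
    (hf0 : f ∅ = 0)
    (ρ : Fin n → ℝ) (hρ0 : ∀ i, 0 ≤ ρ i)
    (hρP : ∀ S : Finset (Fin n), ∑ i ∈ S, ρ i ≤ f S)
    (d : Fin n → ℝ) (hd : ∀ i, 0 ≤ d i)
    (i : Fin n)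
    (Prd : Set (Fin n → ℝ))
    (hPrd : Prd = {x | (∀ j, 0 ≤ x j) ∧ (∀ j, x j ≤ d j) ∧
        ∀ S : Finset (Fin n), ∑ j ∈ S, (ρ j + x j) ≤ f S}) :
    sSup {a : ℝ | 0 ≤ a ∧
        {y : Fin n → ℝ | Function.update y i a ∈ Prd}
          = {y : Fin n → ℝ | Function.update y i 0 ∈ Prd}}
      = sSup {s : ℝ | ∃ x ∈ Prd, s = ∑ j, x j}
        - sSup {s : ℝ | ∃ x ∈ Prd, s = ∑ j ∈ Finset.univ.erase i, x j} :=
  clinch_amount_formula_general n f hsub hf0 ρ hρP d hd i Prd hPrd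
end

section
/- (Feldman et al. characterization) Given click-through-rates α_1 ≥ α_2 ≥ ... ≥ α_n ≥ 0, an allocation vector x ≥ 0 is expressible as x_i ≤ E_{π∼D}[α_{π(i)}] for some distribution D over permutations π of [n] if and only if for every subset S ⊆ [n], ∑_{i∈S} x_i ≤ ∑_{j=1}^{|S|} α_j. -/
/-!
Necessity: under any permutation the players of `S` occupy `#S` distinct positions, whose rates
sum to at most the `#S` largest ones. Sufficiency: the feasible allocations form a closed convex
lower set, so an infeasible `x` is strictly separated from it by a functional with nonnegative
weights `w`. Listing the players by decreasing weight and summing by parts against the prefix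
constraints shows that giving the `k`-th position to the `k`-th player earns at least as much
weight as `x`, a contradiction.
-/

open Finset

theorem Fin.val_le_of_strictMono {m n : ℕ} {f : Fin m → Fin n} (hf : StrictMono f) (k : Fin m) :
    (k : ℕ) ≤ f k :=
  calc (k : ℕ) = #(Iio k) := (Fin.card_Iio k).symm
    _ = #((Iio k).image f) := (card_image_of_injective _ hf.injective).symm
    _ ≤ #(Iio (f k)) := card_le_card fun j hj => by
        obtain ⟨i, hi, rfl⟩ := mem_image.mp hj
        exact mem_Iio.mpr (hf (mem_Iio.mp hi))
    _ = f k := Fin.card_Iio _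

theorem Fin.univ_filter_val_lt_eq_map_castLE {m n : ℕ} (h : m ≤ n) :
    univ.filter (fun j : Fin n => (j : ℕ) < m) = univ.map (Fin.castLEEmb h) := by
  ext j
  simp only [mem_filter, mem_univ, true_and, mem_map, Fin.castLEEmb_apply]
  exact ⟨fun hj => ⟨⟨j, hj⟩, rfl⟩, by rintro ⟨k, -, rfl⟩; exact k.2⟩

theorem Antitone.sum_le_sum_filter_val_lt_card {n : ℕ} {α : Fin n → ℝ} (hα : Antitone α)
    (T : Finset (Fin n)) :
    ∑ j ∈ T, α j ≤ ∑ j ∈ univ.filter (fun j : Fin n => (j : ℕ) < #T), α j := by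
  have hT : #T ≤ n := (card_le_univ T).trans_eq (Fintype.card_fin n)
  set f := T.orderEmbOfFin rfl
  calc ∑ j ∈ T, α j = ∑ j ∈ univ.map f.toEmbedding, α j := by rw [map_orderEmbOfFin_univ]
    _ = ∑ k : Fin #T, α (f k) := sum_map _ _ _
    _ ≤ ∑ k : Fin #T, α (Fin.castLE hT k) :=
        sum_le_sum fun k _ => hα (Fin.val_le_of_strictMono f.strictMono k)
    _ = _ := by rw [Fin.univ_filter_val_lt_eq_map_castLE hT, sum_map]; rfl

theorem Antitone.sum_comp_perm_le_sum_filter_val_lt_card {n : ℕ} {α : Fin n → ℝ}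
    (hα : Antitone α) (σ : Equiv.Perm (Fin n)) (S : Finset (Fin n)) :
    ∑ i ∈ S, α (σ i) ≤ ∑ j ∈ univ.filter (fun j : Fin n => (j : ℕ) < #S), α j := by
  simpa only [sum_map, card_map, Equiv.coe_toEmbedding] using
    hα.sum_le_sum_filter_val_lt_card (S.map σ.toEmbedding)

theorem Fin.sum_filter_val_lt_castSucc {M : Type*} [AddCommMonoid M] {n m : ℕ} (hm : m ≤ n)
    (f : Fin (n + 1) → M) :
    ∑ k ∈ univ.filter (fun k : Fin n => (k : ℕ) < m), f k.castSucc =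
      ∑ k ∈ univ.filter (fun k : Fin (n + 1) => (k : ℕ) < m), f k := by
  simp [sum_filter, Fin.sum_univ_castSucc, hm.not_gt]

theorem Antitone.sum_mul_le_sum_mul_of_sum_filter_val_lt_le {n : ℕ} {μ u v : Fin n → ℝ}
    (hμ : Antitone μ) (hμ0 : 0 ≤ μ)
    (huv : ∀ m ≤ n, ∑ k ∈ univ.filter (fun k : Fin n => (k : ℕ) < m), u k ≤
      ∑ k ∈ univ.filter (fun k : Fin n => (k : ℕ) < m), v k) :
    ∑ k, μ k * u k ≤ ∑ k, μ k * v k := by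
  induction n with
  | zero => simp
  | succ n ih =>
    set c := μ (Fin.last n)
    have split : ∀ w : Fin (n + 1) → ℝ, ∑ k, μ k * w k =
        c * ∑ k, w k + ∑ k : Fin n, (μ k.castSucc - c) * w k.castSucc := fun w => by
      simp only [Fin.sum_univ_castSucc, sub_mul, sum_sub_distrib, mul_add, mul_sum]
      ring
    have htotal : ∑ k, u k ≤ ∑ k, v k := by
      simpa only [Fin.is_lt, filter_true] using huv (n + 1) le_rfl
    have hrest := ih (μ := fun k => μ k.castSucc - c)
      (u := fun k => u k.castSucc) (v := fun k => v k.castSucc)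
      (fun i j hij => sub_le_sub_right (hμ (Fin.castSucc_le_castSucc_iff.mpr hij)) c)
      (fun k => sub_nonneg.mpr (hμ (Fin.le_last _)))
      (fun m hm => by
        simpa only [Fin.sum_filter_val_lt_castSucc hm] using huv m (hm.trans n.le_succ))
    rw [split u, split v]
    exact add_le_add (mul_le_mul_of_nonneg_left htotal (hμ0 _)) hrest

theorem Convex.lowerClosure {𝕜 E : Type*} [Semiring 𝕜] [PartialOrder 𝕜] [AddCommMonoid E]
    [PartialOrder E] [IsOrderedAddMonoid E] [Module 𝕜 E] [PosSMulMono 𝕜 E] {s : Set E}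
    (hs : Convex 𝕜 s) : Convex 𝕜 (lowerClosure s : Set E) := by
  rintro y₁ ⟨z₁, hz₁, hyz₁⟩ y₂ ⟨z₂, hz₂, hyz₂⟩ a b ha hb hab
  exact ⟨a • z₁ + b • z₂, hs hz₁ hz₂ ha hb hab,
    add_le_add (smul_le_smul_of_nonneg_left hyz₁ ha) (smul_le_smul_of_nonneg_left hyz₂ hb)⟩

theorem IsLowerSet.exists_nonneg_dotProduct_lt {ι : Type*} [Fintype ι] {C : Set (ι → ℝ)}
    (hlow : IsLowerSet C) (hconv : Convex ℝ C) (hclosed : IsClosed C) (hne : C.Nonempty)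
    {x : ι → ℝ} (hx : x ∉ C) : ∃ w : ι → ℝ, 0 ≤ w ∧ ∀ y ∈ C, w ⬝ᵥ y < w ⬝ᵥ x := by
  classical
  obtain ⟨f, u, hfC, hux⟩ := geometric_hahn_banach_closed_point hconv hclosed hx
  set w : ι → ℝ := fun i => f (Pi.single i 1)
  have hf : ∀ y, f y = w ⬝ᵥ y := fun y => by
    conv_lhs => rw [pi_eq_sum_univ' y]
    simp [w, dotProduct, mul_comm]
  refine ⟨w, fun i => ?_, fun y hy => hf y ▸ hf x ▸ (hfC y hy).trans hux⟩
  by_contra! hwi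
  obtain ⟨y, hy⟩ := hne
  -- moving down along the `i`-th axis stays in `C`, but raises `f` up to the level `u`
  set t := (u - f y) / -w i
  have ht : 0 ≤ t := div_nonneg (sub_nonneg.mpr (hfC y hy).le) (neg_nonneg.mpr hwi.le)
  have hmem : y - t • Pi.single i 1 ∈ C :=
    hlow (sub_le_self _ (smul_nonneg ht (Pi.single_nonneg.mpr zero_le_one))) hy
  have hval : f (y - t • Pi.single i 1) = u := by
    have htw : t * w i = -(u - f y) := by
      rw [div_mul_eq_mul_div, div_eq_iff (neg_ne_zero.mpr hwi.ne)]; ring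
    rw [map_sub, map_smul, smul_eq_mul, htw]
    ring
  exact (hfC _ hmem).ne hval

theorem exists_perm_dotProduct_le_of_sum_le {n : ℕ} {α x w : Fin n → ℝ} (hw : 0 ≤ w)
    (H : ∀ S : Finset (Fin n),
      ∑ i ∈ S, x i ≤ ∑ j ∈ univ.filter (fun j : Fin n => (j : ℕ) < #S), α j) :
    ∃ σ : Equiv.Perm (Fin n), w ⬝ᵥ x ≤ w ⬝ᵥ (α ∘ σ) := by
  set ρ := Tuple.sort (OrderDual.toDual ∘ w)
  have hρ : Antitone (w ∘ ρ) := monotone_toDual_comp_iff.mp (Tuple.monotone_sort _)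
  refine ⟨ρ.symm, ?_⟩
  have hprefix : ∀ m ≤ n, ∑ k ∈ univ.filter (fun k : Fin n => (k : ℕ) < m), x (ρ k) ≤
      ∑ k ∈ univ.filter (fun k : Fin n => (k : ℕ) < m), α k := fun m hm => by
    have hcard : #((univ.filter fun k : Fin n => (k : ℕ) < m).map ρ.toEmbedding) = m := by
      rw [card_map, Fin.card_filter_val_lt, min_eq_right hm]
    simpa only [sum_map, Equiv.coe_toEmbedding, hcard] using
      H ((univ.filter fun k : Fin n => (k : ℕ) < m).map ρ.toEmbedding)
  calc w ⬝ᵥ x = (w ∘ ρ) ⬝ᵥ (x ∘ ρ) := (comp_equiv_dotProduct_comp_equiv _ _ ρ).symm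
    _ ≤ (w ∘ ρ) ⬝ᵥ α :=
        hρ.sum_mul_le_sum_mul_of_sum_filter_val_lt_le (fun k => hw (ρ k)) hprefix
    _ = w ⬝ᵥ (α ∘ ρ.symm) := (dotProduct_comp_equiv_symm _ _ ρ).symm

theorem feldman_characterization_general (n : ℕ) (α : Fin n → ℝ)
    (hαmono : ∀ i j : Fin n, i ≤ j → α j ≤ α i)
    (x : Fin n → ℝ) :
    (∃ D : Equiv.Perm (Fin n) → ℝ,
        (∀ π, 0 ≤ D π) ∧ (∑ π : Equiv.Perm (Fin n), D π = 1) ∧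
        ∀ i, x i ≤ ∑ π : Equiv.Perm (Fin n), D π * α (π i))
      ↔ ∀ S : Finset (Fin n),
          ∑ i ∈ S, x i ≤ ∑ j ∈ Finset.univ.filter (fun j : Fin n => (j : ℕ) < S.card), α j := by
  constructor
  · rintro ⟨D, hD0, hD1, hx⟩ S
    calc ∑ i ∈ S, x i ≤ ∑ i ∈ S, ∑ π, D π * α (π i) := sum_le_sum fun i _ => hx i
      _ = ∑ π, D π * ∑ i ∈ S, α (π i) := by rw [sum_comm]; simp only [mul_sum]
      _ ≤ ∑ π, D π * ∑ j ∈ univ.filter (fun j : Fin n => (j : ℕ) < #S), α j :=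
          sum_le_sum fun π _ => mul_le_mul_of_nonneg_left
            (Antitone.sum_comp_perm_le_sum_filter_val_lt_card hαmono π S) (hD0 π)
      _ = _ := by rw [← sum_mul, hD1, one_mul]
  · intro H
    set clicks := Fintype.linearCombination ℝ fun π : Equiv.Perm (Fin n) => α ∘ π
    set K := clicks '' stdSimplex ℝ (Equiv.Perm (Fin n))
    have hK : IsCompact K :=
      (isCompact_stdSimplex _ _).image clicks.continuous_of_finiteDimensional
    have hσK (σ : Equiv.Perm (Fin n)) : α ∘ σ ∈ K :=
      ⟨Pi.single σ 1, single_mem_stdSimplex ℝ σ, by simp [clicks]⟩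
    have hfeasible : x ∈ lowerClosure K := by
      by_contra hx
      obtain ⟨w, hw, hsep⟩ := (lowerClosure K).lower.exists_nonneg_dotProduct_lt
        ((convex_stdSimplex ℝ _).linear_image clicks).lowerClosure
        (hK.isClosed.lowerClosure_pi hK.isBounded.bddAbove) ⟨_, subset_lowerClosure (hσK 1)⟩ hx
      obtain ⟨σ, hσ⟩ := exists_perm_dotProduct_le_of_sum_le hw H
      exact (hsep _ (subset_lowerClosure (hσK σ))).not_ge hσ
    obtain ⟨_, ⟨D, ⟨hD0, hD1⟩, rfl⟩, hxD⟩ := hfeasible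
    exact ⟨D, hD0, hD1, fun i => by simpa [clicks, Fintype.linearCombination_apply] using hxD i⟩

theorem feldman_characterization (n : ℕ) (α : Fin n → ℝ)
    (hα0 : ∀ j, 0 ≤ α j)
    (hαmono : ∀ i j : Fin n, i ≤ j → α j ≤ α i)
    (x : Fin n → ℝ) (hx0 : ∀ i, 0 ≤ x i) :
    (∃ D : Equiv.Perm (Fin n) → ℝ,
        (∀ π, 0 ≤ D π) ∧ (∑ π : Equiv.Perm (Fin n), D π = 1) ∧
        ∀ i, x i ≤ ∑ π : Equiv.Perm (Fin n), D π * α (π i))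
      ↔ ∀ S : Finset (Fin n),
          ∑ i ∈ S, x i ≤ ∑ j ∈ Finset.univ.filter (fun j : Fin n => (j : ℕ) < S.card), α j :=
  feldman_characterization_general n α hαmono x
end

section
/- (McDiarmid / polymatroid version of Rado's theorem, aggregation form) Given a bipartite graph between players [n] and keywords [m] with neighborhoods Γ, and monotone submodular functions f_1, ..., f_m with f_k(∅)=0, the set P* = {x ∈ ℝ^n_+ : x_i = ∑_{k ∈ Γ(i)} x_i^k with each x^k ∈ P_k} is a polymatroid defined by f*(S) = ∑_k f_k(S ∩ Γ(k)), where P_k is the polymatroid of f_k restricted to Γ(k). -/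
/-!
The claims about `f*` hold because normalized monotone submodular functions are closed under
restriction `S ↦ f (S ∩ A)` and under sums. The description of `P*` is the additivity of
polymatroids, `P(f + g) = P(f) + P(g)` (Minkowski sum), applied to the restricted `f_k`, whose
polymatroids consist of the vectors supported on `Γ k` and bounded by `f_k` there.

Only `P(f + g) ⊆ P(f) + P(g)` needs work. Both sides are compact and convex, so a point outside
the right side is separated from it by a linear functional `w`. Extending greedily along the
chain of upper level sets `{w > t}`, `t ≥ 0`, gives `y ∈ P(f)` and `z ∈ P(g)` tight on all of
them. Any `x ∈ P(f + g)` then has `x {w > t} ≤ (y + z) {w > t}` for every `t ≥ 0`, and summing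
by layers gives `w ⬝ x ≤ w ⬝ (y + z)`, so `x` is not separated after all.
-/

open Finset
open scoped Pointwise

variable {ι : Type*}

structure IsPolymatroidRank [DecidableEq ι] (f : Finset ι → ℝ) : Prop where
  mono : Monotone f
  submodular : ∀ S T, f (S ∪ T) + f (S ∩ T) ≤ f S + f T
  empty : f ∅ = 0

def polymatroid (f : Finset ι → ℝ) : Set (ι → ℝ) :=
  {x | (∀ i, 0 ≤ x i) ∧ ∀ S, ∑ i ∈ S, x i ≤ f S}

namespace IsPolymatroidRank

variable [DecidableEq ι] {f g : Finset ι → ℝ}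

theorem nonneg (hf : IsPolymatroidRank f) (S : Finset ι) : 0 ≤ f S :=
  hf.empty ▸ hf.mono (empty_subset S)

theorem zero : IsPolymatroidRank (0 : Finset ι → ℝ) :=
  ⟨monotone_const, fun _ _ => le_rfl, rfl⟩

theorem add (hf : IsPolymatroidRank f) (hg : IsPolymatroidRank g) :
    IsPolymatroidRank (f + g) where
  mono := hf.mono.add hg.mono
  submodular S T := by
    simp only [Pi.add_apply]
    linarith [hf.submodular S T, hg.submodular S T]
  empty := by simp [hf.empty, hg.empty]

theorem sum {κ : Type*} {f : κ → Finset ι → ℝ} (s : Finset κ)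
    (hf : ∀ k ∈ s, IsPolymatroidRank (f k)) : IsPolymatroidRank (∑ k ∈ s, f k) :=
  Finset.sum_induction f IsPolymatroidRank (fun _ _ => add) zero hf

theorem inter (hf : IsPolymatroidRank f) (A : Finset ι) :
    IsPolymatroidRank fun S => f (S ∩ A) where
  mono _ _ h := hf.mono (inter_subset_inter_right h)
  submodular S T := by
    show f ((S ∪ T) ∩ A) + f ((S ∩ T) ∩ A) ≤ f (S ∩ A) + f (T ∩ A)
    rw [union_inter_distrib_right, inter_inter_distrib_right]
    exact hf.submodular (S ∩ A) (T ∩ A)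
  empty := by simpa using hf.empty

theorem zero_mem_polymatroid (hf : IsPolymatroidRank f) :
    0 ∈ polymatroid f :=
  ⟨fun _ => le_rfl, fun S => by simpa using hf.nonneg S⟩

end IsPolymatroidRank

theorem sum_inter_eq_sum_of_notMem {M : Type*} [AddCommMonoid M] [DecidableEq ι] {y : ι → M}
    {Q : Finset ι} (h : ∀ i ∉ Q, y i = 0) (S : Finset ι) :
    ∑ i ∈ S ∩ Q, y i = ∑ i ∈ S, y i :=
  sum_subset inter_subset_left fun i hiS hi => h i fun hiQ => hi (mem_inter.2 ⟨hiS, hiQ⟩)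

section Polymatroid

variable {f g : Finset ι → ℝ}

theorem isClosed_polymatroid (f : Finset ι → ℝ) : IsClosed (polymatroid f) := by
  simp only [polymatroid, Set.ofPred_and, Set.ofPred_forall]
  exact (isClosed_iInter fun i => isClosed_le continuous_const (continuous_apply i)).inter
    (isClosed_iInter fun S => isClosed_le
      (continuous_finsetSum _ fun i _ => continuous_apply i) continuous_const)

theorem isCompact_polymatroid (f : Finset ι → ℝ) : IsCompact (polymatroid f) :=
  (isCompact_Icc (a := 0) (b := fun i => f {i})).of_isClosed_subset (isClosed_polymatroid f)
    fun x hx => ⟨hx.1, fun i => by simpa using hx.2 {i}⟩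

theorem convex_polymatroid (f : Finset ι → ℝ) : Convex ℝ (polymatroid f) := by
  simp only [polymatroid, Set.ofPred_and, Set.ofPred_forall]
  exact (convex_iInter fun i => convex_halfSpace_ge (LinearMap.proj i).isLinear 0).inter
    (convex_iInter fun S => convex_halfSpace_le
      ⟨fun x y => sum_add_distrib, fun c x => (mul_sum _ _ _).symm⟩ (f S))

theorem polymatroid_zero : polymatroid (0 : Finset ι → ℝ) = 0 := by
  ext x
  refine ⟨fun hx => funext fun i => le_antisymm (by simpa using hx.2 {i}) (hx.1 i), ?_⟩
  rintro rfl
  exact ⟨fun _ => le_rfl, fun _ => by simp⟩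

theorem add_polymatroid_subset : polymatroid f + polymatroid g ⊆ polymatroid (f + g) := by
  rintro _ ⟨y, hy, z, hz, rfl⟩
  refine ⟨fun i => add_nonneg (hy.1 i) (hz.1 i), fun S => ?_⟩
  simp only [Pi.add_apply, sum_add_distrib]
  exact add_le_add (hy.2 S) (hz.2 S)

end Polymatroid

section Greedy

variable [DecidableEq ι] {f : Finset ι → ℝ}

theorem mem_polymatroid_inter_iff (hf : f ∅ = 0) (A : Finset ι) {y : ι → ℝ} :
    y ∈ polymatroid (fun S => f (S ∩ A)) ↔
      (∀ i, 0 ≤ y i) ∧ (∀ i ∉ A, y i = 0) ∧ ∀ S ⊆ A, ∑ i ∈ S, y i ≤ f S := by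
  refine ⟨fun ⟨hy0, hyf⟩ => ⟨hy0, fun i hi => ?_, fun S hS => ?_⟩,
    fun ⟨hy0, hyA, hyf⟩ => ⟨hy0, fun S => ?_⟩⟩
  · refine le_antisymm ?_ (hy0 i)
    simpa [singleton_inter_of_notMem hi, hf] using hyf {i}
  · simpa [inter_eq_left.2 hS] using hyf S
  · rw [← sum_inter_eq_sum_of_notMem hyA]
    exact hyf _ inter_subset_right

theorem update_mem_polymatroid (hf : IsPolymatroidRank f) {y : ι → ℝ}
    (hy : y ∈ polymatroid f) {Q : Finset ι} (hQ : ∀ i ∉ Q, y i = 0) {a : ι} (ha : a ∉ Q) :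
    Function.update y a (f (insert a Q) - f Q) ∈ polymatroid f := by
  have hgain : 0 ≤ f (insert a Q) - f Q := sub_nonneg.2 (hf.mono (subset_insert a Q))
  refine ⟨fun i => ?_, fun S => ?_⟩
  · rcases eq_or_ne i a with rfl | hi
    · simpa using hgain
    · simpa [hi] using hy.1 i
  by_cases haS : a ∈ S
  · have hrest : ∑ i ∈ S \ {a}, y i = ∑ i ∈ S ∩ Q, y i := by
      rw [← sum_inter_eq_sum_of_notMem hQ, sdiff_inter_right_comm, sdiff_singleton_eq_erase,
        erase_eq_of_notMem]
      exact fun h => ha (mem_inter.1 h).2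
    have hsub := hf.submodular Q (insert a (S ∩ Q))
    rw [union_insert, union_eq_left.2 inter_subset_right, inter_insert_of_notMem ha,
      inter_eq_right.2 inter_subset_right] at hsub
    have hmono := hf.mono (insert_subset haS (inter_subset_left : S ∩ Q ⊆ S))
    rw [sum_update_of_mem haS, hrest]
    linarith [hy.2 (S ∩ Q)]
  · rw [sum_update_of_notMem haS]
    exact hy.2 S

theorem exists_tight_extension (hf : IsPolymatroidRank f) {y : ι → ℝ}
    (hy : y ∈ polymatroid f) {Q : Finset ι} (hQ : ∀ i ∉ Q, y i = 0)
    (htight : ∑ i ∈ Q, y i = f Q) (D : Finset ι) :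
    ∃ z ∈ polymatroid f, (∀ i ∉ Q ∪ D, z i = 0) ∧ ∑ i ∈ Q ∪ D, z i = f (Q ∪ D) ∧
      ∀ i ∈ Q, z i = y i := by
  induction D using Finset.induction_on with
  | empty => exact ⟨y, hy, by simpa using hQ, by simpa using htight, fun _ _ => rfl⟩
  | insert a D _ ih =>
    obtain ⟨z, hz, hzQ, hztight, hzy⟩ := ih
    rw [union_insert]
    by_cases ha : a ∈ Q ∪ D
    · rw [insert_eq_of_mem ha]
      exact ⟨z, hz, hzQ, hztight, hzy⟩
    refine ⟨_, update_mem_polymatroid hf hz hzQ ha, fun i hi => ?_, ?_, fun i hi => ?_⟩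
    · rw [mem_insert, not_or] at hi
      rw [Function.update_of_ne hi.1]
      exact hzQ i hi.2
    · rw [sum_insert ha, Function.update_self, sum_congr rfl fun i hi =>
        Function.update_of_ne (ne_of_mem_of_not_mem hi ha) _ _, hztight]
      ring
    · rw [Function.update_of_ne (ne_of_mem_of_not_mem (mem_union_left D hi) ha)]
      exact hzy i hi

theorem exists_mem_polymatroid_tight_on_chain (hf : IsPolymatroidRank f)
    (𝒞 : Finset (Finset ι)) (h𝒞 : IsChain (· ⊆ ·) (𝒞 : Set (Finset ι))) :
    ∃ y ∈ polymatroid f, (∀ i ∉ 𝒞.sup id, y i = 0) ∧ ∑ i ∈ 𝒞.sup id, y i = f (𝒞.sup id) ∧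
      ∀ C ∈ 𝒞, ∑ i ∈ C, y i = f C := by
  revert h𝒞
  refine Finset.induction_on_max_value card 𝒞
    (fun _ => ⟨0, hf.zero_mem_polymatroid, fun _ _ => rfl, by simp [hf.empty], by simp⟩)
    fun M 𝒞 _ hcard ih h𝒞 => ?_
  rw [coe_insert] at h𝒞
  obtain ⟨y, hy, hyU, hytight, hyC⟩ := ih (h𝒞.mono (Set.subset_insert _ _))
  have hCM : ∀ C ∈ 𝒞, C ⊆ M := fun C hC =>
    (h𝒞.total (Set.mem_insert_of_mem _ hC) (Set.mem_insert _ _)).elim id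
      fun hMC => (eq_of_subset_of_card_le hMC (hcard C hC)).ge
  have hUM : 𝒞.sup id ∪ M = M := union_eq_right.2 (Finset.sup_le hCM)
  have hsup : (insert M 𝒞).sup id = M :=
    sup_insert.trans (sup_eq_left.2 (Finset.sup_le hCM))
  obtain ⟨z, hz, hzM, hztight, hzy⟩ := exists_tight_extension hf hy hyU hytight M
  rw [hUM] at hzM hztight
  rw [hsup]
  refine ⟨z, hz, hzM, hztight, (forall_mem_insert _ _ _).2 ⟨hztight, fun C hC => ?_⟩⟩
  rw [← hyC C hC]
  exact sum_congr rfl fun i hi => hzy i (le_sup (f := id) hC hi)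

end Greedy

section LevelSets

variable [Fintype ι]

theorem sum_mul_le_sum_mul_of_sum_levelSet_le {w x y : ι → ℝ} (hx : ∀ i, 0 ≤ x i)
    (hy : ∀ i, w i < 0 → y i = 0)
    (hxy : ∀ t, 0 ≤ t → ∑ i with t < w i, x i ≤ ∑ i with t < w i, y i) :
    ∑ i, w i * x i ≤ ∑ i, w i * y i := by
  induction hN : #{i | 0 < w i} using Nat.strong_induction_on generalizing w with
  | _ N ih =>
  obtain hP | ⟨i₀, hi₀, hmin⟩ := (univ.filter fun i => 0 < w i).eq_empty_or_nonempty.imp id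
    fun hP => exists_min_image _ w hP
  · have hw : ∀ i, w i ≤ 0 := fun i => not_lt.1 fun h => by
      simpa [hP] using (mem_filter_univ (p := fun i => 0 < w i) i).2 h
    calc ∑ i, w i * x i ≤ 0 :=
          sum_nonpos fun i _ => mul_nonpos_of_nonpos_of_nonneg (hw i) (hx i)
      _ = ∑ i, w i * y i := by
        refine (sum_eq_zero fun i _ => ?_).symm
        rcases (hw i).lt_or_eq with h | h <;> simp [h, hy]
  -- Peel off the smallest positive weight `μ` from every positive weight.
  set μ := w i₀
  have hμ : 0 < μ := (mem_filter_univ i₀).1 hi₀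
  set w' : ι → ℝ := fun i => if 0 < w i then w i - μ else w i
  have hdecomp : ∀ z : ι → ℝ,
      ∑ i, w i * z i = ∑ i, w' i * z i + μ * ∑ i with 0 < w i, z i := by
    intro z
    rw [mul_sum, sum_filter, ← sum_add_distrib]
    refine sum_congr rfl fun i _ => ?_
    simp only [w']
    split_ifs <;> ring
  have hlevel : ∀ s, 0 ≤ s →
      univ.filter (fun i => s < w' i) = univ.filter fun i => s + μ < w i := by
    intro s hs
    ext i
    simp only [mem_filter_univ, w']
    split_ifs with h <;> constructor <;> intro h' <;> linarith
  have hcard : #{i | 0 < w' i} < N := by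
    rw [← hN, hlevel 0 le_rfl]
    refine card_lt_card ⟨monotone_filter_right _ fun i _ h => by linarith, fun h => ?_⟩
    have hi₀' : 0 + μ < μ := (mem_filter_univ i₀).1 (h hi₀)
    linarith
  have key := ih _ hcard (w := w') (fun i hi => hy i ?_) (fun s hs => ?_) rfl
  · rw [hdecomp x, hdecomp y]
    exact add_le_add key (mul_le_mul_of_nonneg_left (by simpa using hxy 0 le_rfl) hμ.le)
  · simp only [w'] at hi
    split_ifs at hi with h
    · linarith [hmin i ((mem_filter_univ (p := fun i => 0 < w i) i).2 h)]
    · exact hi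
  · rw [hlevel s hs]
    exact hxy _ (by linarith)

theorem exists_mem_polymatroid_tight_on_levelSets [DecidableEq ι] {f : Finset ι → ℝ}
    (hf : IsPolymatroidRank f) (w : ι → ℝ) :
    ∃ y ∈ polymatroid f, (∀ i, w i ≤ 0 → y i = 0) ∧
      ∀ t, 0 ≤ t → ∑ i with t < w i, y i = f {i | t < w i} := by
  classical
  set 𝒞 : Finset (Finset ι) :=
    univ.filter fun C => ∃ t, 0 ≤ t ∧ C = univ.filter fun i => t < w i
  have h𝒞 : IsChain (· ⊆ ·) (𝒞 : Set (Finset ι)) := by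
    rintro _ h₁ _ h₂ -
    obtain ⟨t₁, -, rfl⟩ := (mem_filter_univ _).1 h₁
    obtain ⟨t₂, -, rfl⟩ := (mem_filter_univ _).1 h₂
    rcases le_total t₁ t₂ with h | h
    · exact .inr (monotone_filter_right _ fun i _ hi => h.trans_lt hi)
    · exact .inl (monotone_filter_right _ fun i _ hi => h.trans_lt hi)
  obtain ⟨y, hy, hysupp, -, hytight⟩ := exists_mem_polymatroid_tight_on_chain hf 𝒞 h𝒞
  refine ⟨y, hy, fun i hi => hysupp i fun hmem => ?_, fun t ht => hytight _ ?_⟩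
  · obtain ⟨C, hC, hiC⟩ := mem_sup.1 hmem
    obtain ⟨t, ht, rfl⟩ := (mem_filter_univ _).1 hC
    exact (ht.trans_lt ((mem_filter_univ i).1 hiC)).not_ge hi
  · exact (mem_filter_univ _).2 ⟨t, ht, rfl⟩

theorem polymatroid_add [DecidableEq ι] {f g : Finset ι → ℝ} (hf : IsPolymatroidRank f)
    (hg : IsPolymatroidRank g) : polymatroid (f + g) = polymatroid f + polymatroid g := by
  refine add_polymatroid_subset.antisymm' fun x hx => ?_
  by_contra hxK
  obtain ⟨φ, u, hφK, hφx⟩ := geometric_hahn_banach_closed_point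
    ((convex_polymatroid f).add (convex_polymatroid g))
    ((isCompact_polymatroid f).add (isCompact_polymatroid g)).isClosed hxK
  set w : ι → ℝ := fun i => φ fun j => if i = j then 1 else 0
  have hφ : ∀ z, φ z = ∑ i, w i * z i := fun z => by
    simp only [w, mul_comm (φ _)]
    exact φ.toLinearMap.pi_apply_eq_sum_univ z
  obtain ⟨y, hy, hy0, hytight⟩ := exists_mem_polymatroid_tight_on_levelSets hf w
  obtain ⟨z, hz, hz0, hztight⟩ := exists_mem_polymatroid_tight_on_levelSets hg w
  have hle : ∑ i, w i * x i ≤ ∑ i, w i * (y + z) i := by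
    refine sum_mul_le_sum_mul_of_sum_levelSet_le hx.1 (fun i hi => ?_) fun t ht => ?_
    · simp [hy0 i hi.le, hz0 i hi.le]
    · simp only [Pi.add_apply, sum_add_distrib, hytight t ht, hztight t ht]
      exact hx.2 _
  have := hφK (y + z) (Set.add_mem_add hy hz)
  rw [hφ] at this hφx
  linarith

theorem polymatroid_sum [DecidableEq ι] {κ : Type*} (s : Finset κ) {f : κ → Finset ι → ℝ}
    (hf : ∀ k ∈ s, IsPolymatroidRank (f k)) :
    polymatroid (∑ k ∈ s, f k) = ∑ k ∈ s, polymatroid (f k) := by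
  classical
  induction s using Finset.induction_on with
  | empty => simpa using polymatroid_zero
  | insert a s ha ih =>
    rw [forall_mem_insert] at hf
    rw [sum_insert ha, sum_insert ha, polymatroid_add hf.1 (IsPolymatroidRank.sum s hf.2),
      ih hf.2]

end LevelSets

theorem mcdiarmid_aggregation (n m : ℕ)
    (Γ : Fin m → Finset (Fin n))
    (f : Fin m → Finset (Fin n) → ℝ)
    (hmono : ∀ k, ∀ S T : Finset (Fin n), S ⊆ T → f k S ≤ f k T)
    (hsub : ∀ k, ∀ S T : Finset (Fin n), f k (S ∪ T) + f k (S ∩ T) ≤ f k S + f k T)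
    (hf0 : ∀ k, f k ∅ = 0)
    (fStar : Finset (Fin n) → ℝ)
    (hfStar : ∀ S : Finset (Fin n), fStar S = ∑ k, f k (S ∩ Γ k)) :
    (∀ S T : Finset (Fin n), S ⊆ T → fStar S ≤ fStar T) ∧
    (∀ S T : Finset (Fin n), fStar (S ∪ T) + fStar (S ∩ T) ≤ fStar S + fStar T) ∧
    {x : Fin n → ℝ | (∀ i, 0 ≤ x i) ∧
        ∃ y : Fin m → Fin n → ℝ,
          (∀ k i, 0 ≤ y k i) ∧
          (∀ k i, i ∉ Γ k → y k i = 0) ∧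
          (∀ k, ∀ S : Finset (Fin n), S ⊆ Γ k → ∑ i ∈ S, y k i ≤ f k S) ∧
          (∀ i, x i = ∑ k, y k i)}
      = {x : Fin n → ℝ | (∀ i, 0 ≤ x i) ∧
          ∀ S : Finset (Fin n), ∑ i ∈ S, x i ≤ fStar S} := by
  have hrank : ∀ k ∈ univ, IsPolymatroidRank fun S => f k (S ∩ Γ k) :=
    fun k _ => IsPolymatroidRank.inter ⟨fun S T => hmono k S T, hsub k, hf0 k⟩ (Γ k)
  have hStar : fStar = ∑ k, fun S => f k (S ∩ Γ k) := funext fun S => by simp [hfStar]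
  have hStarRank : IsPolymatroidRank fStar := hStar ▸ IsPolymatroidRank.sum univ hrank
  refine ⟨fun S T h => hStarRank.mono h, hStarRank.submodular, ?_⟩
  change _ = polymatroid fStar
  ext x
  rw [hStar, polymatroid_sum univ hrank, Set.mem_finsetSum]
  simp only [mem_univ, forall_const, mem_polymatroid_inter_iff (hf0 _), Set.mem_ofPred_eq]
  constructor
  · rintro ⟨-, y, hy0, hyΓ, hyf, hx⟩
    exact ⟨y, fun {k} => ⟨hy0 k, hyΓ k, hyf k⟩, funext fun i => by simp [hx i]⟩
  · rintro ⟨y, hy, rfl⟩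
    refine ⟨fun i => ?_, y, fun k => hy.1, fun k => hy.2.1, fun k => hy.2.2,
      fun i => Finset.sum_apply ..⟩
    rw [Finset.sum_apply]
    exact sum_nonneg fun k _ => hy.1 i
end

section
/- (Uniqueness of right limits in the VCG family) Let P ⊆ ℝ²_+ be convex and let x(v), x̃(v) be two allocation rules with x(v), x̃(v) ∈ argmax_{y∈P} vᵗy for all v ∈ ℝ²_+. Then lim_{v'₁ ↓ v₁} x(v'₁, v₂) = lim_{v'₁ ↓ v₁} x̃(v'₁, v₂) whenever these right-hand limits exist (and they do exist and coincide). -/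
open Filter Set Topology

/-! Fix `v₂ > 0` and let `t ↦ x t` be any selection of maximizers of `(t, v₂) ⬝ y` over `P`.
Comparing the optimality of `x s` and `x t` for `0 ≤ s < t` (a revealed-preference exchange)
gives `(x s).1 ≤ (x t).1` and `(x t).2 ≤ (x s).2`, and the same holds when `x s` and `x t` come
from two different selections. Hence each coordinate is monotone on `(v₁, ∞)` and, `P` being
compact, bounded, so it has a right limit at `v₁`; the cross inequalities between two selections
pass to the limit in both directions and force the limits to agree. -/

def IsLinearMaximizer (P : Set (ℝ × ℝ)) (v a : ℝ × ℝ) : Prop :=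
  a ∈ P ∧ ∀ y ∈ P, v.1 * y.1 + v.2 * y.2 ≤ v.1 * a.1 + v.2 * a.2

theorem le_of_tendsto_nhdsGT_of_forall_le {α β : Type*} [TopologicalSpace α] [LinearOrder α]
    [OrderTopology α] [TopologicalSpace β] [Preorder β] [OrderClosedTopology β]
    {a : α} [(𝓝[>] a).NeBot] {f g : α → β} {L M : β}
    (hf : Tendsto f (𝓝[>] a) (𝓝 L)) (hg : Tendsto g (𝓝[>] a) (𝓝 M))
    (h : ∀ s t, a < s → s < t → f s ≤ g t) : L ≤ M := by
  have hL : ∀ t ∈ Ioi a, L ≤ g t := fun t ht =>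
    le_of_tendsto hf (mem_of_superset (Ioo_mem_nhdsGT ht) fun s hs => h s t hs.1 hs.2)
  exact ge_of_tendsto hg (eventually_nhdsWithin_of_forall hL)

namespace IsLinearMaximizer

variable {P : Set (ℝ × ℝ)} {a b : ℝ × ℝ} {s t c : ℝ}

theorem fst_le_fst (ha : IsLinearMaximizer P (s, c) a) (hb : IsLinearMaximizer P (t, c) b)
    (hst : s < t) : a.1 ≤ b.1 := by
  have hab := ha.2 b hb.1
  have hba := hb.2 a ha.1
  dsimp only at hab hba
  -- the sum of the two optimality inequalities is `(t - s) * (b.1 - a.1) ≥ 0`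
  nlinarith

theorem snd_le_snd (ha : IsLinearMaximizer P (s, c) a) (hb : IsLinearMaximizer P (t, c) b)
    (hs : 0 ≤ s) (hst : s < t) (hc : 0 < c) : b.2 ≤ a.2 := by
  have hfst := ha.fst_le_fst hb hst
  have hab := ha.2 b hb.1
  dsimp only at hab
  nlinarith [mul_nonneg hs (sub_nonneg.2 hfst)]

end IsLinearMaximizer

section RightLimit

variable {P : Set (ℝ × ℝ)} {c v₁ : ℝ} {x y : ℝ → ℝ × ℝ}

theorem exists_tendsto_nhdsGT_of_isLinearMaximizer (hP : IsCompact P)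
    (hx : ∀ t, IsLinearMaximizer P (t, c) (x t)) (hv₁ : 0 ≤ v₁) (hc : 0 < c) :
    ∃ L, Tendsto x (𝓝[>] v₁) (𝓝 L) := by
  have hmaps : MapsTo x (Ioi v₁) P := fun t _ => (hx t).1
  have hfst : MonotoneOn (fun t => (x t).1) (Ioi v₁) := fun s _ t _ hst =>
    hst.eq_or_lt.elim (fun h => h ▸ le_rfl) fun h => (hx s).fst_le_fst (hx t) h
  have hsnd : AntitoneOn (fun t => (x t).2) (Ioi v₁) := fun s hs t _ hst =>
    hst.eq_or_lt.elim (fun h => h ▸ le_rfl) fun h =>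
      (hx s).snd_le_snd (hx t) (hv₁.trans hs.le) h hc
  have hbdd₁ : BddBelow ((fun t => (x t).1) '' Ioi v₁) :=
    (hP.image continuous_fst).bddBelow.mono
      (image_comp Prod.fst x _ ▸ image_mono hmaps.image_subset)
  have hbdd₂ : BddAbove ((fun t => (x t).2) '' Ioi v₁) :=
    (hP.image continuous_snd).bddAbove.mono
      (image_comp Prod.snd x _ ▸ image_mono hmaps.image_subset)
  exact ⟨_, (hfst.tendsto_nhdsGT hbdd₁).prodMk_nhds (hsnd.tendsto_nhdsGT hbdd₂)⟩

theorem tendsto_nhdsGT_isLinearMaximizer_unique {L M : ℝ × ℝ}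
    (hx : ∀ t, IsLinearMaximizer P (t, c) (x t)) (hy : ∀ t, IsLinearMaximizer P (t, c) (y t))
    (hv₁ : 0 ≤ v₁) (hc : 0 < c)
    (hxL : Tendsto x (𝓝[>] v₁) (𝓝 L)) (hyM : Tendsto y (𝓝[>] v₁) (𝓝 M)) : L = M := by
  have hfst {f g : ℝ → ℝ × ℝ} {A B : ℝ × ℝ} (hf : ∀ t, IsLinearMaximizer P (t, c) (f t))
      (hg : ∀ t, IsLinearMaximizer P (t, c) (g t)) (hfA : Tendsto f (𝓝[>] v₁) (𝓝 A))
      (hgB : Tendsto g (𝓝[>] v₁) (𝓝 B)) : A.1 ≤ B.1 :=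
    le_of_tendsto_nhdsGT_of_forall_le hfA.fst_nhds hgB.fst_nhds
      fun s t _ hst => (hf s).fst_le_fst (hg t) hst
  have hsnd {f g : ℝ → ℝ × ℝ} {A B : ℝ × ℝ} (hf : ∀ t, IsLinearMaximizer P (t, c) (f t))
      (hg : ∀ t, IsLinearMaximizer P (t, c) (g t)) (hfA : Tendsto f (𝓝[>] v₁) (𝓝 A))
      (hgB : Tendsto g (𝓝[>] v₁) (𝓝 B)) : B.2 ≤ A.2 :=
    le_of_tendsto_nhdsGT_of_forall_le (β := ℝᵒᵈ) hfA.snd_nhds hgB.snd_nhds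
      fun s t hs hst => (hf s).snd_le_snd (hg t) (hv₁.trans hs.le) hst hc
  exact Prod.ext (le_antisymm (hfst hx hy hxL hyM) (hfst hy hx hyM hxL))
    (le_antisymm (hsnd hy hx hyM hxL) (hsnd hx hy hxL hyM))

end RightLimit

theorem vcg_family_right_limit_unique_general
    (P : Set (ℝ × ℝ)) (hcomp : IsCompact P)
    (x xt : ℝ × ℝ → ℝ × ℝ)
    (hx : ∀ v : ℝ × ℝ, x v ∈ P ∧
      ∀ y ∈ P, v.1 * y.1 + v.2 * y.2 ≤ v.1 * (x v).1 + v.2 * (x v).2)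
    (hxt : ∀ v : ℝ × ℝ, xt v ∈ P ∧
      ∀ y ∈ P, v.1 * y.1 + v.2 * y.2 ≤ v.1 * (xt v).1 + v.2 * (xt v).2)
    (v₁ v₂ : ℝ) (hv₁ : 0 ≤ v₁) (hv₂ : 0 < v₂) :
    ∃ L : ℝ × ℝ,
      Tendsto (fun t : ℝ => x (t, v₂)) (nhdsWithin v₁ (Set.Ioi v₁)) (nhds L) ∧
      Tendsto (fun t : ℝ => xt (t, v₂)) (nhdsWithin v₁ (Set.Ioi v₁)) (nhds L) := by
  have hxs : ∀ t, IsLinearMaximizer P (t, v₂) (x (t, v₂)) := fun t => hx (t, v₂)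
  have hxts : ∀ t, IsLinearMaximizer P (t, v₂) (xt (t, v₂)) := fun t => hxt (t, v₂)
  obtain ⟨L, hL⟩ := exists_tendsto_nhdsGT_of_isLinearMaximizer hcomp hxs hv₁ hv₂
  obtain ⟨M, hM⟩ := exists_tendsto_nhdsGT_of_isLinearMaximizer hcomp hxts hv₁ hv₂
  obtain rfl := tendsto_nhdsGT_isLinearMaximizer_unique hxs hxts hv₁ hv₂ hL hM
  exact ⟨L, hL, hM⟩

theorem vcg_family_right_limit_unique
    (P : Set (ℝ × ℝ)) (hcomp : IsCompact P) (hconv : Convex ℝ P)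
    (hpos : ∀ z ∈ P, 0 ≤ z.1 ∧ 0 ≤ z.2)
    (hdc : ∀ z ∈ P, ∀ w : ℝ × ℝ, 0 ≤ w.1 → 0 ≤ w.2 → w.1 ≤ z.1 → w.2 ≤ z.2 → w ∈ P)
    (x xt : ℝ × ℝ → ℝ × ℝ)
    (hx : ∀ v : ℝ × ℝ, x v ∈ P ∧
      ∀ y ∈ P, v.1 * y.1 + v.2 * y.2 ≤ v.1 * (x v).1 + v.2 * (x v).2)
    (hxt : ∀ v : ℝ × ℝ, xt v ∈ P ∧
      ∀ y ∈ P, v.1 * y.1 + v.2 * y.2 ≤ v.1 * (xt v).1 + v.2 * (xt v).2)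
    (v₁ v₂ : ℝ) (hv₁ : 0 ≤ v₁) (hv₂ : 0 < v₂) :
    ∃ L : ℝ × ℝ,
      Tendsto (fun t : ℝ => x (t, v₂)) (nhdsWithin v₁ (Set.Ioi v₁)) (nhds L) ∧
      Tendsto (fun t : ℝ => xt (t, v₂)) (nhdsWithin v₁ (Set.Ioi v₁)) (nhds L) :=
  vcg_family_right_limit_unique_general P hcomp x xt hx hxt v₁ v₂ hv₁ hv₂
end

section
/- (Greedy clinching for the single-keyword AdWords polytope) Let α₁ ≥ ... ≥ α_n ≥ 0 and P = {x ≥ 0 : x(S) ≤ ∑_{j=1}^{|S|} α_j ∀S}. Given ρ ∈ P and d ≥ 0, assume coordinates sorted so ρ₁+d₁ ≥ ... ≥ ρ_n+d_n, and define z_i = min{ρ_i + d_i, ∑_{j=1}^i α_j − ∑_{j=1}^{i−1} z_j} inductively. Then ∑_i z_i − ∑_i ρ_i equals max{∑_i x_i : x + ρ ∈ P, 0 ≤ x ≤ d}. -/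
/-!
The greedy vector `z` dominates every feasible `ρ + x` prefix by prefix, which gives the upper
bound. For the lower bound, `S ↦ A |S|` with `A k = α₁ + ⋯ + α_k` is submodular because `α` is
nonincreasing, so a maximiser `y` of `∑ y` over `{ρ ≤ y ≤ ρ + d, y(S) ≤ A |S|}` has a tight set `T`
(the union of all tight sets) outside of which `y = ρ + d`; hence `∑ y = A |T| + (ρ + d)(Tᶜ)`.
As `ρ + d` is sorted, `(ρ + d)(Tᶜ)` is at least the sum of its last `|Tᶜ|` entries, and the greedy
rule gives `∑ z ≤ A t + ∑_{j ≥ t} (ρ + d)_j` for every `t`.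
-/

open Finset Filter Topology

namespace Polymatroid

variable {ι : Type*}

def box [Fintype ι] (f : Finset ι → ℝ) (lo hi : ι → ℝ) : Set (ι → ℝ) :=
  Set.Icc lo hi ∩ {y | ∀ S, ∑ i ∈ S, y i ≤ f S}

theorem isCompact_box [Fintype ι] (f : Finset ι → ℝ) (lo hi : ι → ℝ) :
    IsCompact (box f lo hi) := by
  refine isCompact_Icc.inter_right ?_
  rw [Set.ofPred_forall]
  exact isClosed_iInter fun S =>
    isClosed_le (continuous_finsetSum S fun i _ => continuous_apply i) continuous_const

variable [DecidableEq ι] {f : Finset ι → ℝ} {lo hi y : ι → ℝ}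

theorem tight_union (hf : ∀ S T, f (S ∪ T) + f (S ∩ T) ≤ f S + f T)
    (hy : ∀ S, ∑ i ∈ S, y i ≤ f S) {S T : Finset ι}
    (hS : ∑ i ∈ S, y i = f S) (hT : ∑ i ∈ T, y i = f T) :
    ∑ i ∈ S ∪ T, y i = f (S ∪ T) := by
  have := sum_union_inter (s₁ := S) (s₂ := T) (f := y)
  linarith [hf S T, hy (S ∪ T), hy (S ∩ T)]

theorem exists_tight_forall_subset [Fintype ι]
    (hf : ∀ S T, f (S ∪ T) + f (S ∩ T) ≤ f S + f T)
    (hf₀ : f ∅ = 0) (hy : ∀ S, ∑ i ∈ S, y i ≤ f S) :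
    ∃ T, ∑ i ∈ T, y i = f T ∧ ∀ S, ∑ i ∈ S, y i = f S → S ⊆ T := by
  refine ⟨(univ.filter fun S => ∑ i ∈ S, y i = f S).sup id, ?_, fun S hS => ?_⟩
  · exact sup_induction (p := fun T => ∑ i ∈ T, y i = f T) (by simp [hf₀])
      (fun S hS T hT => tight_union hf hy hS hT) fun S hS => (mem_filter.mp hS).2
  · exact le_sup (f := id) (mem_filter.mpr ⟨mem_univ S, hS⟩)

theorem sum_add_single (S : Finset ι) (i : ι) (ε : ℝ) :
    ∑ j ∈ S, (y + Pi.single i ε : ι → ℝ) j = ∑ j ∈ S, y j + if i ∈ S then ε else 0 := by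
  simp [sum_add_distrib, sum_pi_single']

theorem exists_tight_of_isMaxOn [Fintype ι] (hy : y ∈ box f lo hi)
    (hmax : IsMaxOn (fun y => ∑ i, y i) (box f lo hi) y) {i : ι} (hyi : y i < hi i) :
    ∃ S, i ∈ S ∧ ∑ j ∈ S, y j = f S := by
  -- If `i` lies in no tight set, `y + ε • eᵢ` stays feasible for all small `ε > 0`.
  by_contra! hslack
  have hbox : ∀ᶠ ε in 𝓝 (0 : ℝ), y i + ε ≤ hi i :=
    (eventually_lt_nhds (sub_pos.mpr hyi)).mono fun ε h => by linarith
  have hcon : ∀ᶠ ε in 𝓝 (0 : ℝ), ∀ S, ∑ j ∈ S, (y + Pi.single i ε : ι → ℝ) j ≤ f S := by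
    refine eventually_all.mpr fun S => ?_
    by_cases hiS : i ∈ S
    · have : 0 < f S - ∑ j ∈ S, y j := sub_pos.mpr <| (hy.2 S).lt_of_ne (hslack S hiS)
      refine (eventually_lt_nhds this).mono fun ε h => ?_
      rw [sum_add_single, if_pos hiS]; linarith
    · exact Eventually.of_forall fun ε => by
        rw [sum_add_single, if_neg hiS, add_zero]; exact hy.2 S
  obtain ⟨ε, ⟨hεbox, hεcon⟩, hε⟩ :=
    (((hbox.and hcon).filter_mono nhdsWithin_le_nhds).and self_mem_nhdsWithin).exists
      (f := 𝓝[>] (0 : ℝ))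
  have hmem : y + Pi.single i ε ∈ box f lo hi := by
    refine ⟨⟨fun j => ?_, fun j => ?_⟩, hεcon⟩ <;> rcases eq_or_ne j i with rfl | hj
    · simpa using (hy.1.1 j).trans (le_add_of_nonneg_right hε.le)
    · simpa [hj] using hy.1.1 j
    · simpa using hεbox
    · simpa [hj] using hy.1.2 j
  have := hmax hmem
  simp only [Set.mem_ofPred_eq] at this
  rw [sum_add_single, if_pos (mem_univ i)] at this
  linarith [show (0 : ℝ) < ε from hε]

theorem exists_sum_eq_add_sum_compl [Fintype ι]
    (hf : ∀ S T, f (S ∪ T) + f (S ∩ T) ≤ f S + f T) (hf₀ : f ∅ = 0)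
    (hlo : lo ∈ box f lo hi) :
    ∃ y ∈ box f lo hi, ∃ T, ∑ i, y i = f T + ∑ i ∈ Tᶜ, hi i := by
  obtain ⟨y, hy, hmax⟩ := (isCompact_box f lo hi).exists_isMaxOn ⟨lo, hlo⟩
    (continuous_finsetSum univ fun i _ => continuous_apply i).continuousOn
  obtain ⟨T, hT, hmaxT⟩ := exists_tight_forall_subset hf hf₀ hy.2
  have hsat : ∀ i ∈ Tᶜ, y i = hi i := fun i hi' => by
    by_contra hne
    obtain ⟨S, hiS, hS⟩ := exists_tight_of_isMaxOn hy hmax ((hy.1.2 i).lt_of_ne hne)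
    exact mem_compl.mp hi' (hmaxT S hS hiS)
  refine ⟨y, hy, T, ?_⟩
  rw [← sum_add_sum_compl T, hT, sum_congr rfl hsat]

end Polymatroid

section PrefixSum

variable {n : ℕ}

def prefixSum (g : Fin n → ℝ) (k : ℕ) : ℝ :=
  ∑ j ∈ univ.filter (fun j : Fin n => (j : ℕ) < k), g j

@[simp]
theorem prefixSum_zero (g : Fin n → ℝ) : prefixSum g 0 = 0 := by
  simp [prefixSum]

theorem prefixSum_succ (g : Fin n → ℝ) (k : ℕ) :
    prefixSum g (k + 1) = prefixSum g k + if h : k < n then g ⟨k, h⟩ else 0 := by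
  unfold prefixSum
  split_ifs with hk
  · rw [add_comm _ (g _), ← sum_insert (f := g) (a := ⟨k, hk⟩) (by simp)]
    congr 1
    ext j
    simp [Fin.ext_iff, le_iff_eq_or_lt]
  · rw [add_zero]
    congr 1
    ext j
    simp only [mem_filter, mem_univ, true_and]
    omega

theorem prefixSum_of_le (g : Fin n → ℝ) {k : ℕ} (hk : n ≤ k) : prefixSum g k = ∑ j, g j := by
  unfold prefixSum
  congr 1
  ext j
  simp [j.isLt.trans_le hk]

theorem sum_filter_le_eq_prefixSum (g : Fin n → ℝ) (i : ℕ) :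
    ∑ j ∈ univ.filter (fun j : Fin n => (j : ℕ) ≤ i), g j = prefixSum g (i + 1) := by
  simp only [prefixSum, Nat.lt_succ_iff]

theorem prefixSum_add_sum_filter_le (g : Fin n → ℝ) (t : ℕ) :
    prefixSum g t + ∑ j ∈ univ.filter (fun j : Fin n => t ≤ (j : ℕ)), g j = ∑ j, g j := by
  unfold prefixSum
  simpa only [not_lt] using sum_filter_add_sum_filter_not univ (fun j : Fin n => (j : ℕ) < t) g

theorem card_filter_le_val (t : ℕ) : (univ.filter fun j : Fin n => t ≤ (j : ℕ)).card = n - t := by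
  have := card_filter_add_card_filter_not (s := univ) (fun j : Fin n => (j : ℕ) < t)
  simp only [not_lt, Fin.card_filter_val_lt, card_univ, Fintype.card_fin] at this
  omega

theorem antitone_prefixSum_succ_sub {α : Fin n → ℝ} (hα₀ : ∀ j, 0 ≤ α j) (hα : Antitone α) :
    Antitone fun k => prefixSum α (k + 1) - prefixSum α k := by
  refine antitone_nat_of_succ_le fun k => ?_
  simp only [prefixSum_succ, add_sub_cancel_left]
  split_ifs with h₁ h₂ h₂
  · exact hα (Fin.mk_le_mk.mpr k.le_succ)
  · omega
  · exact hα₀ _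
  · rfl

end PrefixSum

theorem sub_le_sub_of_antitone_succ_sub {F : ℕ → ℝ} (hF : Antitone fun k => F (k + 1) - F k)
    {a b : ℕ} (hab : a ≤ b) (m : ℕ) : F (b + m) - F b ≤ F (a + m) - F a := by
  induction m with
  | zero => simp
  | succ m ih =>
    have := hF (Nat.add_le_add_right hab m)
    simp only [← add_assoc] at this ⊢
    linarith

theorem card_union_add_card_inter_le {ι : Type*} [DecidableEq ι] {F : ℕ → ℝ}
    (hF : Antitone fun k => F (k + 1) - F k) (S T : Finset ι) :
    F (S ∪ T).card + F (S ∩ T).card ≤ F S.card + F T.card := by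
  have hcard := card_union_add_card_inter S T
  have hST : (S ∩ T).card ≤ S.card := card_le_card inter_subset_left
  have hTS : (S ∩ T).card ≤ T.card := card_le_card inter_subset_right
  have := sub_le_sub_of_antitone_succ_sub hF hST (T.card - (S ∩ T).card)
  rw [show S.card + (T.card - (S ∩ T).card) = (S ∪ T).card by omega,
    show (S ∩ T).card + (T.card - (S ∩ T).card) = T.card by omega] at this
  linarith

theorem sum_le_sum_of_card_eq {ι : Type*} [DecidableEq ι] {c : ι → ℝ} {U V : Finset ι}
    (hcard : U.card = V.card) (v : ℝ) (hV : ∀ j ∈ V \ U, c j ≤ v) (hU : ∀ i ∈ U \ V, v ≤ c i) :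
    ∑ j ∈ V, c j ≤ ∑ i ∈ U, c i := by
  have hsdiff : (V \ U).card = (U \ V).card := by
    have := card_sdiff_add_card_inter V U
    have := card_sdiff_add_card_inter U V
    rw [inter_comm] at this
    omega
  rw [← sum_inter_add_sum_sdiff V U, ← sum_inter_add_sum_sdiff U V, inter_comm U V]
  refine add_le_add le_rfl ?_
  calc ∑ j ∈ V \ U, c j ≤ (V \ U).card • v := sum_le_card_nsmul _ _ _ hV
    _ = (U \ V).card • v := by rw [hsdiff]
    _ ≤ ∑ i ∈ U \ V, c i := card_nsmul_le_sum _ _ _ hU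

theorem Antitone.sum_filter_le_le_sum {n : ℕ} {c : Fin n → ℝ} (hc : Antitone c) (t : ℕ)
    {U : Finset (Fin n)} (hU : U.card = n - t) :
    ∑ j ∈ univ.filter (fun j : Fin n => t ≤ (j : ℕ)), c j ≤ ∑ i ∈ U, c i := by
  rcases lt_or_ge t n with ht | ht
  · refine sum_le_sum_of_card_eq (by rw [hU, card_filter_le_val]) (c ⟨t, ht⟩) ?_ ?_
    · intro j hj
      exact hc (by simpa [Fin.le_iff_val_le_val] using (mem_sdiff.mp hj).1)
    · intro i hi
      have : ¬ t ≤ (i : ℕ) := by simpa using (mem_sdiff.mp hi).2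
      exact hc (Fin.le_iff_val_le_val.mpr (by simp; omega))
  · have hV := card_filter_le_val (n := n) t
    rw [card_eq_zero.mp (show U.card = 0 by omega),
      card_eq_zero.mp (show (univ.filter fun j : Fin n => t ≤ (j : ℕ)).card = 0 by omega)]

section Greedy

variable {n : ℕ} {A : ℕ → ℝ} {c z : Fin n → ℝ}

def IsGreedy (A : ℕ → ℝ) (c z : Fin n → ℝ) : Prop :=
  ∀ i : Fin n, z i = min (c i) (A (i + 1) - prefixSum z i)

theorem prefixSum_le_prefixSum_greedy (hz : IsGreedy A c z) {y : Fin n → ℝ}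
    (hyc : ∀ i, y i ≤ c i) (hyA : ∀ k ≤ n, prefixSum y k ≤ A k) :
    ∀ k ≤ n, prefixSum y k ≤ prefixSum z k := by
  intro k hk
  induction k with
  | zero => simp
  | succ k ih =>
    have hkn : k < n := hk
    have hyA' := hyA (k + 1) hk
    rw [prefixSum_succ, dif_pos hkn] at hyA' ⊢
    rw [prefixSum_succ, dif_pos hkn, hz ⟨k, hkn⟩]
    have := ih hkn.le
    rcases min_choice (c ⟨k, hkn⟩) (A (k + 1) - prefixSum z k) with h | h <;> rw [h]
    · linarith [hyc ⟨k, hkn⟩]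
    · linarith

theorem sum_le_sum_greedy (hz : IsGreedy A c z) {y : Fin n → ℝ}
    (hyc : ∀ i, y i ≤ c i) (hyA : ∀ S : Finset (Fin n), ∑ i ∈ S, y i ≤ A S.card) :
    ∑ i, y i ≤ ∑ i, z i := by
  have hyA' : ∀ k ≤ n, prefixSum y k ≤ A k := fun k hk => by
    simpa [prefixSum, Fin.card_filter_val_lt, hk] using hyA (univ.filter fun j : Fin n => j < k)
  have hprefix := prefixSum_le_prefixSum_greedy hz hyc hyA' n le_rfl
  rwa [prefixSum_of_le _ le_rfl, prefixSum_of_le _ le_rfl] at hprefix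

theorem prefixSum_greedy_le (hz : IsGreedy A c z) (hA₀ : 0 ≤ A 0) : ∀ k ≤ n, prefixSum z k ≤ A k
  | 0, _ => by simpa using hA₀
  | k + 1, hk => by
    rw [prefixSum_succ, dif_pos (Nat.lt_of_succ_le hk), hz ⟨k, hk⟩]
    linarith [min_le_right (c ⟨k, hk⟩) (A (k + 1) - prefixSum z k)]

theorem sum_greedy_le (hz : IsGreedy A c z) (hA₀ : 0 ≤ A 0) {t : ℕ} (ht : t ≤ n) :
    ∑ i, z i ≤ A t + ∑ j ∈ univ.filter (fun j : Fin n => t ≤ (j : ℕ)), c j := by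
  rw [← prefixSum_add_sum_filter_le z t]
  exact add_le_add (prefixSum_greedy_le hz hA₀ t ht)
    (sum_le_sum fun i _ => (hz i).trans_le (min_le_left _ _))

end Greedy

theorem greedy_clinching_adwords_general (n : ℕ) (α : Fin n → ℝ)
    (hα0 : ∀ j, 0 ≤ α j)
    (hαmono : ∀ i j : Fin n, i ≤ j → α j ≤ α i)
    (ρ : Fin n → ℝ)
    (hρP : ∀ S : Finset (Fin n), ∑ i ∈ S, ρ i ≤
      ∑ j ∈ Finset.univ.filter (fun j : Fin n => (j : ℕ) < S.card), α j)
    (d : Fin n → ℝ) (hd : ∀ i, 0 ≤ d i)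
    (hsorted : ∀ i j : Fin n, i ≤ j → ρ j + d j ≤ ρ i + d i)
    (z : Fin n → ℝ)
    (hz : ∀ i : Fin n, z i = min (ρ i + d i)
      ((∑ j ∈ Finset.univ.filter (fun j : Fin n => (j : ℕ) ≤ (i : ℕ)), α j)
        - ∑ j ∈ Finset.univ.filter (fun j : Fin n => (j : ℕ) < (i : ℕ)), z j)) :
    IsGreatest
      {s : ℝ | ∃ x : Fin n → ℝ,
        (∀ i, 0 ≤ x i ∧ x i ≤ d i) ∧
        (∀ S : Finset (Fin n), ∑ i ∈ S, (ρ i + x i) ≤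
          ∑ j ∈ Finset.univ.filter (fun j : Fin n => (j : ℕ) < S.card), α j) ∧
        s = ∑ i, x i}
      (∑ i, z i - ∑ i, ρ i) := by
  have hz' : IsGreedy (prefixSum α) (ρ + d) z := fun i => by
    rw [hz i, sum_filter_le_eq_prefixSum]; rfl
  obtain ⟨y, ⟨⟨hρy, hyc⟩, hyS⟩, T, hyT⟩ :=
    Polymatroid.exists_sum_eq_add_sum_compl (f := fun S => prefixSum α S.card) (lo := ρ)
      (hi := ρ + d) (card_union_add_card_inter_le (antitone_prefixSum_succ_sub hα0 hαmono))
      (prefixSum_zero α) ⟨⟨le_rfl, fun i => le_add_of_nonneg_right (hd i)⟩, hρP⟩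
  have hzy : ∑ i, z i ≤ ∑ i, y i := calc
    ∑ i, z i ≤ prefixSum α T.card + ∑ j ∈ univ.filter (fun j : Fin n => T.card ≤ (j : ℕ)),
        (ρ + d) j :=
      sum_greedy_le hz' (prefixSum_zero α).ge ((card_le_univ T).trans_eq (Fintype.card_fin n))
    _ ≤ prefixSum α T.card + ∑ i ∈ Tᶜ, (ρ + d) i := add_le_add le_rfl <|
      Antitone.sum_filter_le_le_sum hsorted _ (U := Tᶜ) (by rw [card_compl, Fintype.card_fin])
    _ = ∑ i, y i := hyT.symm
  refine ⟨⟨y - ρ, fun i => ⟨sub_nonneg.mpr (hρy i), sub_le_iff_le_add'.mpr (hyc i)⟩,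
    fun S => by simpa [prefixSum] using hyS S, ?_⟩, ?_⟩
  · rw [Pi.sub_def, sum_sub_distrib, le_antisymm (sum_le_sum_greedy hz' hyc hyS) hzy]
  · rintro _ ⟨x, hx, hxS, rfl⟩
    have := sum_le_sum_greedy hz' (y := ρ + x) (fun i => add_le_add le_rfl (hx i).2) hxS
    rw [Pi.add_def, sum_add_distrib] at this
    linarith

theorem greedy_clinching_adwords (n : ℕ) (α : Fin n → ℝ)
    (hα0 : ∀ j, 0 ≤ α j)
    (hαmono : ∀ i j : Fin n, i ≤ j → α j ≤ α i)
    (ρ : Fin n → ℝ) (hρ0 : ∀ i, 0 ≤ ρ i)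
    (hρP : ∀ S : Finset (Fin n), ∑ i ∈ S, ρ i ≤
      ∑ j ∈ Finset.univ.filter (fun j : Fin n => (j : ℕ) < S.card), α j)
    (d : Fin n → ℝ) (hd : ∀ i, 0 ≤ d i)
    (hsorted : ∀ i j : Fin n, i ≤ j → ρ j + d j ≤ ρ i + d i)
    (z : Fin n → ℝ)
    (hz : ∀ i : Fin n, z i = min (ρ i + d i)
      ((∑ j ∈ Finset.univ.filter (fun j : Fin n => (j : ℕ) ≤ (i : ℕ)), α j)
        - ∑ j ∈ Finset.univ.filter (fun j : Fin n => (j : ℕ) < (i : ℕ)), z j)) :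
    IsGreatest
      {s : ℝ | ∃ x : Fin n → ℝ,
        (∀ i, 0 ≤ x i ∧ x i ≤ d i) ∧
        (∀ S : Finset (Fin n), ∑ i ∈ S, (ρ i + x i) ≤
          ∑ j ∈ Finset.univ.filter (fun j : Fin n => (j : ℕ) < S.card), α j) ∧
        s = ∑ i, x i}
      (∑ i, z i - ∑ i, ρ i) :=
  greedy_clinching_adwords_general n α hα0 hαmono ρ hρP d hd hsorted z hz
end
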